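/- arXiv:2405.12615 — 6 statements merged into one kernel-verified Lean document; each statement's English description precedes it below -/
import Mathlib

section
/- Let p be a full-support joint probability mass function on the variables (S, A, S') whose next-step state variables are mutually conditionally independent given the current-step variables, i.e. p(s' | s, a) = ∏_{j=1}^{n_s} p(s'_j | s, a) for every configuration. If G is a directed acyclic graph on the variables (S, A, S') such that p is compatible with G and faithful to G, then G contains no edge between two distinct next-step state variables S'_j and S'_k. -/
open Finset

noncomputable section

/-- Marginal probability that a configuration agrees with `x` on the coordinates in `E`. -/
def marg {V : Type*} [Fintype V] [DecidableEq V] {val : V → Type*}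
    [∀ v, Fintype (val v)] [∀ v, DecidableEq (val v)]
    (p : (∀ v, val v) → ℝ) (E : Finset V) (x : ∀ v, val v) : ℝ :=
  ∑ y : ∀ v, val v, if ∀ v ∈ E, y v = x v then p y else 0

/-- Conditional probability of the value of coordinate `v` given the values of `P`. -/
def condP {V : Type*} [Fintype V] [DecidableEq V] {val : V → Type*}
    [∀ v, Fintype (val v)] [∀ v, DecidableEq (val v)]
    (p : (∀ v, val v) → ℝ) (v : V) (P : Finset V) (x : ∀ v, val v) : ℝ :=
  marg p (insert v P) x / marg p P x

/-- Conditional independence X ⊥ Y | Z, in cross-multiplied form. -/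
def CondIndep {V : Type*} [Fintype V] [DecidableEq V] {val : V → Type*}
    [∀ v, Fintype (val v)] [∀ v, DecidableEq (val v)]
    (p : (∀ v, val v) → ℝ) (X Y Z : Finset V) : Prop :=
  ∀ x : ∀ v, val v,
    marg p (X ∪ Y ∪ Z) x * marg p Z x = marg p (X ∪ Z) x * marg p (Y ∪ Z) x

/-- Variables of an FMDP: states, actions, next states. -/
abbrev FVar (ns na : ℕ) := Fin ns ⊕ (Fin na ⊕ Fin ns)

/-- Value types of FMDP variables. -/
def fv {ns na : ℕ} (Sv : Fin ns → Type) (Av : Fin na → Type) : FVar ns na → Type :=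
  Sum.elim Sv (Sum.elim Av Sv)

instance {ns na : ℕ} (Sv : Fin ns → Type) (Av : Fin na → Type)
    [∀ i, Fintype (Sv i)] [∀ j, Fintype (Av j)] : ∀ v, Fintype (fv Sv Av v)
  | .inl i => inferInstanceAs (Fintype (Sv i))
  | .inr (.inl j) => inferInstanceAs (Fintype (Av j))
  | .inr (.inr k) => inferInstanceAs (Fintype (Sv k))

instance {ns na : ℕ} (Sv : Fin ns → Type) (Av : Fin na → Type)
    [∀ i, DecidableEq (Sv i)] [∀ j, DecidableEq (Av j)] : ∀ v, DecidableEq (fv Sv Av v)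
  | .inl i => inferInstanceAs (DecidableEq (Sv i))
  | .inr (.inl j) => inferInstanceAs (DecidableEq (Av j))
  | .inr (.inr k) => inferInstanceAs (DecidableEq (Sv k))

/-- The set of current-step coordinates. -/
def curSet (ns na : ℕ) : Finset (FVar ns na) :=
  (Finset.univ.image (Sum.inl : Fin ns → FVar ns na)) ∪
    (Finset.univ.image (fun j : Fin na => (Sum.inr (Sum.inl j) : FVar ns na)))

/-- A joint pmf `p` on (S, A, S') is consistent with the transition kernel `T`. -/
def FConsistent {ns na : ℕ} {Sv : Fin ns → Type} {Av : Fin na → Type}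
    [∀ i, Fintype (Sv i)] [∀ j, Fintype (Av j)]
    [∀ i, DecidableEq (Sv i)] [∀ j, DecidableEq (Av j)]
    (p : (∀ v, fv Sv Av v) → ℝ)
    (T : (∀ i, Sv i) → (∀ j, Av j) → (∀ k, Sv k) → ℝ) : Prop :=
  ∀ x, p x = marg p (curSet ns na) x *
    T (fun i => x (.inl i)) (fun j => x (.inr (.inl j))) (fun k => x (.inr (.inr k)))

/-- An undirected path in a directed graph: consecutive vertices joined by an edge
in either direction, with no repeated vertex. -/
def IsUndirPath {V : Type*} (E : V → V → Prop) (l : List V) : Prop :=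
  l.Chain' (fun a b => E a b ∨ E b a) ∧ l.Nodup

/-- A path is blocked by `Z`: it contains a chain or fork whose middle vertex is in `Z`,
or a collider such that neither the middle vertex nor any of its descendants is in `Z`. -/
def BlockedPath {V : Type*} (E : V → V → Prop) (Z : Set V) (l : List V) : Prop :=
  ∃ (l₁ l₂ : List V) (a b c : V), l = l₁ ++ a :: b :: c :: l₂ ∧
    ((((E a b ∧ E b c) ∨ (E c b ∧ E b a) ∨ (E b a ∧ E b c)) ∧ b ∈ Z) ∨
     ((E a b ∧ E c b) ∧ b ∉ Z ∧ ∀ d, Relation.TransGen E b d → d ∉ Z))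

/-- `X` and `Y` are d-separated by `Z`: every undirected path from a vertex of `X`
to a vertex of `Y` is blocked by `Z`. -/
def DSeparated {V : Type*} (E : V → V → Prop) (X Y Z : Set V) : Prop :=
  ∀ l : List V, IsUndirPath E l →
    (∃ u ∈ X, l.head? = some u) → (∃ w ∈ Y, l.getLast? = some w) →
    BlockedPath E Z l

/-- The graph is acyclic. -/
def Acyclic {V : Type*} (E : V → V → Prop) : Prop :=
  ∀ v, ¬ Relation.TransGen E v v

/-- `p` is faithful to the DAG: every conditional independence between disjoint sets
of variables is a d-separation. -/
def FaithfulTo {V : Type*} [Fintype V] [DecidableEq V] {val : V → Type*}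
    [∀ v, Fintype (val v)] [∀ v, DecidableEq (val v)]
    (p : (∀ v, val v) → ℝ) (E : V → V → Prop) : Prop :=
  ∀ X Y Z : Finset V, Disjoint X Y → Disjoint X Z → Disjoint Y Z →
    CondIndep p X Y Z → DSeparated E ↑X ↑Y ↑Z

/-- `p` is compatible with the DAG: it factorizes as the product over all variables of
the conditional probabilities given the graph parents. -/
def CompatibleWith {V : Type*} [Fintype V] [DecidableEq V] {val : V → Type*}
    [∀ v, Fintype (val v)] [∀ v, DecidableEq (val v)]
    (p : (∀ v, val v) → ℝ) (E : V → V → Prop) [DecidableRel E] : Prop :=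
  ∀ x, p x = ∏ v, condP p v (Finset.univ.filter (fun u => E u v)) x

/-! Summing out the next-step variables one at a time shows that the factorization
`p(s' | s, a) = ∏ⱼ p(s'ⱼ | s, a)` survives on every subfamily of next-step variables, so
`S'ⱼ ⊥ S'ₖ | (S, A)`. Faithfulness turns this into a d-separation, which an edge `S'ⱼ → S'ₖ`
rules out: that edge is a path of two vertices, while blocking requires three consecutive ones. -/

section Marginals

variable {V : Type*} [Fintype V] [DecidableEq V] {val : V → Type*}
    [∀ v, Fintype (val v)] [∀ v, DecidableEq (val v)] {p : (∀ v, val v) → ℝ}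

lemma marg_pos (hpos : ∀ x, 0 < p x) (D : Finset V) (x : ∀ v, val v) : 0 < marg p D x :=
  sum_pos' (fun y _ => by split <;> simp [(hpos y).le]) ⟨x, mem_univ x, by simp [hpos x]⟩

lemma marg_congr {D : Finset V} {x y : ∀ v, val v} (h : ∀ v ∈ D, x v = y v) :
    marg p D x = marg p D y :=
  sum_congr rfl fun z _ => if_congr (forall₂_congr fun v hv => by rw [h v hv]) rfl rfl

lemma condP_congr {v : V} {P : Finset V} {x y : ∀ v, val v}
    (h : ∀ u ∈ insert v P, x u = y u) : condP p v P x = condP p v P y := by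
  unfold condP
  rw [marg_congr h, marg_congr fun u hu => h u (mem_insert_of_mem hu)]

lemma marg_univ (x : ∀ v, val v) : marg p univ x = p x := by
  simp [marg, ← funext_iff]

lemma sum_marg_insert_update {D : Finset V} {v : V} (hv : v ∉ D) (x : ∀ v, val v) :
    ∑ s : val v, marg p (insert v D) (Function.update x v s) = marg p D x := by
  have hupd : ∀ (s : val v), ∀ u ∈ D, Function.update x v s u = x u := fun s u hu =>
    Function.update_of_ne (ne_of_mem_of_not_mem hu hv) _ _
  unfold marg
  rw [sum_comm]
  refine sum_congr rfl fun y _ => ?_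
  simp +contextual [hupd, ite_and]

lemma sum_condP_update (hpos : ∀ x, 0 < p x) {v : V} {P : Finset V} (hv : v ∉ P)
    (x : ∀ v, val v) : ∑ s : val v, condP p v P (Function.update x v s) = 1 := by
  have hP : ∀ s : val v, marg p P (Function.update x v s) = marg p P x := fun s =>
    marg_congr fun u hu => Function.update_of_ne (ne_of_mem_of_not_mem hu hv) _ _
  simp only [condP, hP, ← sum_div, sum_marg_insert_update hv]
  exact div_self (marg_pos hpos P x).ne'

lemma marg_eq_of_marg_insert_eq_mul_condP (hpos : ∀ x, 0 < p x) {C D : Finset V} {a : V}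
    (hC : C ⊆ D) (ha : a ∉ D) {g : (∀ v, val v) → ℝ}
    (hg : ∀ x y, (∀ v ∈ D, x v = y v) → g x = g y)
    (h : ∀ x, marg p (insert a D) x = g x * condP p a C x) (x : ∀ v, val v) :
    marg p D x = g x := by
  have hgx : ∀ s : val a, g (Function.update x a s) = g x := fun s =>
    hg _ _ fun v hv => Function.update_of_ne (ne_of_mem_of_not_mem hv ha) _ _
  rw [← sum_marg_insert_update ha x]
  simp only [h, hgx, ← mul_sum, sum_condP_update hpos (fun haC => ha (hC haC)), mul_one]

lemma marg_union_eq_mul_prod_condP (hpos : ∀ x, 0 < p x) {C N : Finset V}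
    (hdisj : Disjoint C N)
    (hfac : ∀ x, marg p (C ∪ N) x = marg p C x * ∏ v ∈ N, condP p v C x)
    {F : Finset V} (hF : F ⊆ N) (x : ∀ v, val v) :
    marg p (C ∪ F) x = marg p C x * ∏ v ∈ F, condP p v C x := by
  suffices ∀ G ⊆ N, ∀ x,
      marg p (C ∪ (N \ G)) x = marg p C x * ∏ v ∈ N \ G, condP p v C x by
    simpa only [Finset.sdiff_sdiff_eq_self hF] using this (N \ F) sdiff_subset x
  intro G
  induction G using Finset.induction_on with
  | empty => simpa using hfac
  | insert a G haG ih =>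
    intro hG x
    have haN : a ∈ N \ G := mem_sdiff.2 ⟨hG (mem_insert_self a G), haG⟩
    have haC : a ∉ C := disjoint_right.1 hdisj (mem_sdiff.1 haN).1
    rw [sdiff_insert]
    refine marg_eq_of_marg_insert_eq_mul_condP hpos subset_union_left (a := a) (by simp [haC])
      (g := fun y => marg p C y * ∏ v ∈ (N \ G).erase a, condP p v C y)
      (fun y z hyz => ?_) (fun y => ?_) x
    · rw [marg_congr fun v hv => hyz v (mem_union_left _ hv)]
      congr 1
      refine prod_congr rfl fun v hv => condP_congr fun u hu => ?_
      rcases mem_insert.1 hu with rfl | hu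
      exacts [hyz u (mem_union_right _ hv), hyz u (mem_union_left _ hu)]
    · rw [← union_insert, insert_erase haN, ih ((subset_insert a G).trans hG),
        ← mul_prod_erase _ _ haN]
      ring

lemma condIndep_of_marg_union_eq_mul_prod_condP (hpos : ∀ x, 0 < p x) {C N : Finset V}
    (hdisj : Disjoint C N)
    (hfac : ∀ x, marg p (C ∪ N) x = marg p C x * ∏ v ∈ N, condP p v C x)
    {j k : V} (hj : j ∈ N) (hk : k ∈ N) (hjk : j ≠ k) : CondIndep p {j} {k} C := by
  intro x
  have hunion : ({j} ∪ {k} ∪ C : Finset V) = C ∪ {j, k} := by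
    rw [union_comm, singleton_union]
  rw [hunion, union_comm {j}, union_comm {k}]
  simp only [marg_union_eq_mul_prod_condP hpos hdisj hfac (singleton_subset_iff.2 hj),
    marg_union_eq_mul_prod_condP hpos hdisj hfac (singleton_subset_iff.2 hk),
    marg_union_eq_mul_prod_condP hpos hdisj hfac (insert_subset hj (singleton_subset_iff.2 hk)),
    prod_pair hjk, prod_singleton]
  ring

end Marginals

section DSeparation

variable {V : Type*} {E : V → V → Prop}

lemma BlockedPath.three_le_length {Z : Set V} {l : List V} (h : BlockedPath E Z l) :
    3 ≤ l.length := by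
  obtain ⟨l₁, l₂, a, b, c, rfl, -⟩ := h
  simp only [List.length_append, List.length_cons]
  omega

lemma not_dSeparated_of_edge {X Y Z : Set V} {u w : V} (hu : u ∈ X) (hw : w ∈ Y) (huw : u ≠ w)
    (hE : E u w) : ¬ DSeparated E X Y Z := fun hsep =>
  absurd (hsep [u, w] ⟨List.isChain_pair.2 (Or.inl hE), by simpa using huw⟩
    ⟨u, hu, rfl⟩ ⟨w, hw, rfl⟩).three_le_length (by simp)

end DSeparation

section FMDP

def nextSet (ns na : ℕ) : Finset (FVar ns na) :=
  univ.image fun k => .inr (.inr k)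

lemma disjoint_curSet_nextSet (ns na : ℕ) : Disjoint (curSet ns na) (nextSet ns na) := by
  simp [curSet, nextSet, disjoint_left]

lemma curSet_union_nextSet (ns na : ℕ) : curSet ns na ∪ nextSet ns na = univ := by
  ext (i | j | k) <;> simp [curSet, nextSet]

lemma prod_nextSet {ns na : ℕ} {M : Type*} [CommMonoid M] (f : FVar ns na → M) :
    ∏ v ∈ nextSet ns na, f v = ∏ k, f (.inr (.inr k)) :=
  prod_image fun _ _ _ _ h => by simpa using h

end FMDP

theorem faithful_dag_has_no_lateral_next_step_edges_general
    {ns na : ℕ} (Sv : Fin ns → Type) (Av : Fin na → Type)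
    [∀ i, Fintype (Sv i)] [∀ i, DecidableEq (Sv i)]
    [∀ j, Fintype (Av j)] [∀ j, DecidableEq (Av j)]
    (p : (∀ v, fv Sv Av v) → ℝ)
    (hpos : ∀ x, 0 < p x)
    -- p(s' | s, a) = ∏ⱼ p(s'ⱼ | s, a)
    (hci : ∀ x, p x / marg p (curSet ns na) x =
      ∏ k, condP p (.inr (.inr k)) (curSet ns na) x)
    (E : FVar ns na → FVar ns na → Prop)
    (hfaith : FaithfulTo p E) :
    ∀ j k : Fin ns, j ≠ k →
      ¬ E (.inr (.inr j) : FVar ns na) (.inr (.inr k)) := by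
  intro j k hjk hE
  have hfac : ∀ x, marg p (curSet ns na ∪ nextSet ns na) x =
      marg p (curSet ns na) x * ∏ v ∈ nextSet ns na, condP p v (curSet ns na) x := fun x => by
    rw [curSet_union_nextSet, marg_univ, prod_nextSet, ← hci x,
      mul_div_cancel₀ _ (marg_pos hpos _ x).ne']
  have hnext : ∀ m, (.inr (.inr m) : FVar ns na) ∈ nextSet ns na := fun m => by simp [nextSet]
  have hcur : ∀ m, (.inr (.inr m) : FVar ns na) ∉ curSet ns na := fun m => by simp [curSet]
  have hne : (.inr (.inr j) : FVar ns na) ≠ .inr (.inr k) := by simpa using hjk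
  have hCI := condIndep_of_marg_union_eq_mul_prod_condP hpos (disjoint_curSet_nextSet ns na)
    hfac (hnext j) (hnext k) hne
  have hsep := hfaith _ _ _ (disjoint_singleton.2 hne) (disjoint_singleton_left.2 (hcur j))
    (disjoint_singleton_left.2 (hcur k)) hCI
  exact not_dSeparated_of_edge (mem_singleton_self _) (mem_singleton_self _) hne hE hsep

/-- If the next-step variables are mutually conditionally independent given
the current-step variables under a full-support pmf `p`, then any DAG that `p` is compatible
with and faithful to contains no edge between two distinct next-step variables. -/
theorem faithful_dag_has_no_lateral_next_step_edges
    {ns na : ℕ} (Sv : Fin ns → Type) (Av : Fin na → Type)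
    [∀ i, Fintype (Sv i)] [∀ i, DecidableEq (Sv i)] [∀ i, Nonempty (Sv i)]
    [∀ j, Fintype (Av j)] [∀ j, DecidableEq (Av j)] [∀ j, Nonempty (Av j)]
    (p : (∀ v, fv Sv Av v) → ℝ)
    (hpos : ∀ x, 0 < p x) (hsum : ∑ x, p x = 1)
    -- p(s' | s, a) = ∏ⱼ p(s'ⱼ | s, a)
    (hci : ∀ x, p x / marg p (curSet ns na) x =
      ∏ k, condP p (.inr (.inr k)) (curSet ns na) x)
    (E : FVar ns na → FVar ns na → Prop) [DecidableRel E]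
    (hacyc : Acyclic E) (hcompat : CompatibleWith p E) (hfaith : FaithfulTo p E) :
    ∀ j k : Fin ns, j ≠ k →
      ¬ E (.inr (.inr j) : FVar ns na) (.inr (.inr k)) :=
  faithful_dag_has_no_lateral_next_step_edges_general Sv Av p hpos hci E hfaith
end
end

section
/- Let T be a transition kernel with independent transitions, T(s' | s, a) = ∏_{j=1}^{n_s} T_j(s'_j | s, a), and let p be any full-support joint probability mass function on (S, A, S') consistent with T. Then for every current-step coordinate X_i ∈ (S, A) and every next-step coordinate S'_j, the conditional independence X_i ⊥_p S'_j | ((S, A) \ {X_i}) holds if and only if T_j does not depend on current-step coordinate i, i.e. T_j takes equal values at any two current configurations that differ only in coordinate i. -/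
open Finset

noncomputable section

/-- Current-step coordinates of an FMDP: state variables and action variables. -/
abbrev CurVar (ns na : ℕ) := Fin ns ⊕ Fin na

/-- Value types of the current-step coordinates. -/
def cv {ns na : ℕ} (Sv : Fin ns → Type) (Av : Fin na → Type) : CurVar ns na → Type :=
  Sum.elim Sv Av

/-- The coordinates of a current configuration. -/
def curCoord {ns na : ℕ} {Sv : Fin ns → Type} {Av : Fin na → Type}
    (c : (∀ i, Sv i) × (∀ j, Av j)) : ∀ u : CurVar ns na, cv Sv Av u
  | .inl i => c.1 i
  | .inr j => c.2 j

/-- Embedding of current-step coordinates into the full variable set. -/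
def liftCur {ns na : ℕ} : CurVar ns na → FVar ns na :=
  Sum.elim Sum.inl (fun j => Sum.inr (Sum.inl j))

/-! Consistency and independent transitions give `p(s, a, s') = q(s, a) ∏ⱼ Tⱼ(s'ⱼ | s, a)`, where
`q` is the current-step marginal; summing out the next state leaves `q(c) Tⱼ(y | c)` for the
marginal of `((S, A), S'ⱼ)`. Dropping `Xᵢ` turns the marginals into sums over the fibre of current
configurations agreeing with `c` off `i`. After cancelling `q(c) > 0`, the conditional independence
says that `Tⱼ(y | c)` equals its `q`-weighted average over the fibre of `c`, and for positive
weights that happens exactly when `Tⱼ(y | ·)` is constant on the fibres. -/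

theorem sum_filter_apply_eq_prod {ι : Type*} [Fintype ι] [DecidableEq ι] {π : ι → Type*}
    [∀ i, Fintype (π i)] [∀ i, DecidableEq (π i)] (f : ∀ i, π i → ℝ)
    (hf : ∀ i, ∑ a, f i a = 1) (k : ι) (y : π k) :
    ∑ t : ∀ i, π i with t k = y, ∏ i, f i (t i) = f k y := by
  rw [← Fintype.piFinset_univ, ← Fintype.piFinset_update_singleton_eq_filter_piFinset_eq
    (fun i => (univ : Finset (π i))) k (mem_univ y), ← prod_univ_sum]
  calc ∏ i, ∑ a ∈ Function.update (fun i => (univ : Finset (π i))) k {y} i, f i a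
      = ∏ i, Function.update (fun _ => (1 : ℝ)) k (f k y) i :=
        Fintype.prod_congr _ _ fun i => by
          obtain rfl | hik := eq_or_ne i k <;> simp [*]
    _ = f k y := by simp [prod_update_of_mem]

theorem mul_sum_fiber_eq_iff {α β : Type*} [Fintype α] [DecidableEq β] (π : α → β)
    {w : α → ℝ} (hw : ∀ a, 0 < w a) (g : α → ℝ) :
    (∀ a, g a * ∑ b with π b = π a, w b = ∑ b with π b = π a, w b * g b) ↔
      ∀ a b, π a = π b → g a = g b := by
  constructor
  · intro h a b hab
    have hpos : 0 < ∑ c with π c = π a, w c :=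
      sum_pos (fun c _ => hw c) ⟨a, mem_filter.2 ⟨mem_univ a, rfl⟩⟩
    refine mul_right_cancel₀ hpos.ne' ((h a).trans ?_)
    rw [hab, ← h b]
  · intro h a
    rw [mul_sum]
    exact sum_congr rfl fun b hb => by rw [h a b (mem_filter.1 hb).2.symm, mul_comm]

section FMDP

variable {ns na : ℕ} {Sv : Fin ns → Type} {Av : Fin na → Type}

def curNextEquiv : (∀ v, fv Sv Av v) ≃ ((∀ i, Sv i) × (∀ j, Av j)) × (∀ m, Sv m) :=
  (Equiv.sumPiEquivProdPi _).trans <|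
    ((Equiv.refl _).prodCongr (Equiv.sumPiEquivProdPi _)).trans (Equiv.prodAssoc _ _ _).symm

theorem forall_mem_curSet_iff {P : FVar ns na → Prop} :
    (∀ v ∈ curSet ns na, P v) ↔ ∀ u, P (liftCur u) := by
  simp [curSet, liftCur]

theorem liftCur_injective : Function.Injective (liftCur (ns := ns) (na := na)) := by
  rintro (i | j) (i' | j') h <;> simp_all [liftCur]

theorem apply_liftCur_eq_iff (x y : ∀ v, fv Sv Av v) (u : CurVar ns na) :
    y (liftCur u) = x (liftCur u) ↔
      curCoord (curNextEquiv y).1 u = curCoord (curNextEquiv x).1 u := by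
  cases u <;> rfl

theorem curCoord_injective :
    Function.Injective (curCoord : (∀ i, Sv i) × (∀ j, Av j) → ∀ u : CurVar ns na, cv Sv Av u) :=
  fun _ _ h => Prod.ext (funext fun i => congrFun h (.inl i)) (funext fun j => congrFun h (.inr j))

def offCoords (u : CurVar ns na) (c : (∀ i, Sv i) × (∀ j, Av j)) :
    ∀ u' : {u' // u' ≠ u}, cv Sv Av u' :=
  fun u' => curCoord c u'

theorem offCoords_eq_iff {u : CurVar ns na} {c c' : (∀ i, Sv i) × (∀ j, Av j)} :
    offCoords u c = offCoords u c' ↔ ∀ u' ≠ u, curCoord c u' = curCoord c' u' := by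
  simp [offCoords, funext_iff]

theorem agree_on_curSet_iff (x y : ∀ v, fv Sv Av v) :
    (∀ v ∈ curSet ns na, y v = x v) ↔ (curNextEquiv y).1 = (curNextEquiv x).1 := by
  simp only [forall_mem_curSet_iff, apply_liftCur_eq_iff]
  exact funext_iff.symm.trans curCoord_injective.eq_iff

theorem agree_off_liftCur_iff (u : CurVar ns na) (x y : ∀ v, fv Sv Av v) :
    (∀ v ∈ curSet ns na \ {liftCur u}, y v = x v) ↔
      offCoords u (curNextEquiv y).1 = offCoords u (curNextEquiv x).1 := by
  simp only [mem_sdiff, mem_singleton, and_imp, forall_mem_curSet_iff,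
    liftCur_injective.eq_iff, apply_liftCur_eq_iff, offCoords_eq_iff]

variable [∀ i, Fintype (Sv i)]

def curMarg (p : (∀ v, fv Sv Av v) → ℝ) (c : (∀ i, Sv i) × (∀ j, Av j)) : ℝ :=
  ∑ t, p (curNextEquiv.symm (c, t))

theorem curMarg_pos [∀ i, Nonempty (Sv i)] {p : (∀ v, fv Sv Av v) → ℝ} (hp : ∀ x, 0 < p x)
    (c : (∀ i, Sv i) × (∀ j, Av j)) : 0 < curMarg p c :=
  sum_pos (fun _ _ => hp _) univ_nonempty

variable [∀ i, DecidableEq (Sv i)] [∀ j, Fintype (Av j)] [∀ j, DecidableEq (Av j)]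

theorem marg_eq_sum_curMarg (p : (∀ v, fv Sv Av v) → ℝ) {E : Finset (FVar ns na)}
    {x : ∀ v, fv Sv Av v} {R : (∀ i, Sv i) × (∀ j, Av j) → Prop} [DecidablePred R]
    (hE : ∀ y, (∀ v ∈ E, y v = x v) ↔ R (curNextEquiv y).1) :
    marg p E x = ∑ c with R c, curMarg p c := by
  rw [marg, ← curNextEquiv.symm.sum_comp, Fintype.sum_prod_type, sum_filter]
  refine sum_congr rfl fun c _ => ?_
  simp only [hE, Equiv.apply_symm_apply]
  split_ifs <;> simp [curMarg]

theorem marg_curSet (p : (∀ v, fv Sv Av v) → ℝ) (x : ∀ v, fv Sv Av v) :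
    marg p (curSet ns na) x = curMarg p (curNextEquiv x).1 := by
  rw [marg_eq_sum_curMarg p (R := (· = (curNextEquiv x).1)) (agree_on_curSet_iff x)]
  simp [filter_eq']

variable {T : (∀ i, Sv i) → (∀ j, Av j) → (∀ k, Sv k) → ℝ}
  {Tj : ∀ k : Fin ns, (∀ i, Sv i) × (∀ j, Av j) → Sv k → ℝ} {p : (∀ v, fv Sv Av v) → ℝ}

theorem apply_curNextEquiv_symm (hcons : FConsistent p T)
    (hind : ∀ s a s', T s a s' = ∏ k, Tj k (s, a) (s' k)) (c : (∀ i, Sv i) × (∀ j, Av j))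
    (t : ∀ m, Sv m) : p (curNextEquiv.symm (c, t)) = curMarg p c * ∏ m, Tj m c (t m) := by
  rw [hcons, marg_curSet, Equiv.apply_symm_apply]
  exact congrArg _ (hind c.1 c.2 t)

theorem marg_insert_next_eq_sum_curMarg (hcons : FConsistent p T)
    (hind : ∀ s a s', T s a s' = ∏ k, Tj k (s, a) (s' k)) (hTj1 : ∀ k c, ∑ y, Tj k c y = 1)
    (k : Fin ns) {E : Finset (FVar ns na)} {x : ∀ v, fv Sv Av v}
    {R : (∀ i, Sv i) × (∀ j, Av j) → Prop} [DecidablePred R]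
    (hE : ∀ y, (∀ v ∈ E, y v = x v) ↔ R (curNextEquiv y).1) :
    marg p (insert (.inr (.inr k)) E) x =
      ∑ c with R c, curMarg p c * Tj k c ((curNextEquiv x).2 k) := by
  rw [marg, ← curNextEquiv.symm.sum_comp, Fintype.sum_prod_type, sum_filter]
  refine sum_congr rfl fun c _ => ?_
  have hagree (t : ∀ m, Sv m) :
      (∀ v ∈ insert (.inr (.inr k)) E, curNextEquiv.symm (c, t) v = x v) ↔
        R c ∧ t k = (curNextEquiv x).2 k := by
    rw [forall_mem_insert, hE, Equiv.apply_symm_apply, and_comm]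
    rfl
  rw [sum_congr rfl fun t _ => if_congr (hagree t) (apply_curNextEquiv_symm hcons hind c t) rfl]
  simp only [ite_and]
  split_ifs
  · rw [← sum_filter, ← mul_sum, sum_filter_apply_eq_prod _ (hTj1 · c)]
  · simp

instance : ∀ u, DecidableEq (cv Sv Av u)
  | .inl i => inferInstanceAs (DecidableEq (Sv i))
  | .inr j => inferInstanceAs (DecidableEq (Av j))

theorem condIndep_iff_forall_mul_sum_eq [∀ i, Nonempty (Sv i)] (hpos : ∀ x, 0 < p x)
    (hcons : FConsistent p T) (hind : ∀ s a s', T s a s' = ∏ k, Tj k (s, a) (s' k))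
    (hTj1 : ∀ k c, ∑ y, Tj k c y = 1) (u : CurVar ns na) (k : Fin ns) :
    CondIndep p {liftCur u} {.inr (.inr k)} (curSet ns na \ {liftCur u}) ↔
      ∀ y c, Tj k c y * ∑ c' with offCoords u c' = offCoords u c, curMarg p c' =
        ∑ c' with offCoords u c' = offCoords u c, curMarg p c' * Tj k c' y := by
  have hu : liftCur u ∈ curSet ns na := by cases u <;> simp [curSet, liftCur]
  rw [CondIndep, union_right_comm, union_sdiff_of_subset (singleton_subset_iff.2 hu),
    union_comm _ {_}, ← insert_eq, ← insert_eq]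
  simp only [fun x => marg_insert_next_eq_sum_curMarg hcons hind hTj1 k
      (R := (· = (curNextEquiv x).1)) (agree_on_curSet_iff x),
    fun x => marg_insert_next_eq_sum_curMarg hcons hind hTj1 k
      (R := (offCoords u · = offCoords u (curNextEquiv x).1)) (agree_off_liftCur_iff u x),
    marg_curSet,
    fun x => marg_eq_sum_curMarg p
      (R := (offCoords u · = offCoords u (curNextEquiv x).1)) (agree_off_liftCur_iff u x),
    filter_eq', if_pos (mem_univ _), sum_singleton]
  rw [curNextEquiv.forall_congr_left, Prod.forall]
  simp only [Equiv.apply_symm_apply, mul_assoc,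
    mul_right_inj' (curMarg_pos hpos _).ne']
  rw [forall_comm]
  refine ⟨fun h y => ?_, fun h t => h (t k)⟩
  obtain ⟨t, rfl⟩ := Function.surjective_eval (β := Sv) k y
  exact h t

end FMDP

theorem fmdp_ci_iff_kernel_does_not_depend_general
    {ns na : ℕ} (Sv : Fin ns → Type) (Av : Fin na → Type)
    [∀ i, Fintype (Sv i)] [∀ i, DecidableEq (Sv i)] [∀ i, Nonempty (Sv i)]
    [∀ j, Fintype (Av j)] [∀ j, DecidableEq (Av j)]
    (T : (∀ i, Sv i) → (∀ j, Av j) → (∀ k, Sv k) → ℝ)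
    (Tj : ∀ k : Fin ns, (∀ i, Sv i) × (∀ j, Av j) → Sv k → ℝ)
    (hTj1 : ∀ k c, ∑ y, Tj k c y = 1)
    (hind : ∀ s a s', T s a s' = ∏ k, Tj k (s, a) (s' k))
    (p : (∀ v, fv Sv Av v) → ℝ)
    (hpos : ∀ x, 0 < p x) (hcons : FConsistent p T) :
    ∀ (u : CurVar ns na) (k : Fin ns),
      CondIndep p {liftCur u} {(.inr (.inr k) : FVar ns na)}
        (curSet ns na \ {liftCur u}) ↔
      (∀ (c c' : (∀ i, Sv i) × (∀ j, Av j)),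
        (∀ u' : CurVar ns na, u' ≠ u → curCoord c u' = curCoord c' u') →
        ∀ y, Tj k c y = Tj k c' y) := by
  intro u k
  rw [condIndep_iff_forall_mul_sum_eq hpos hcons hind hTj1]
  refine (forall_congr' fun y =>
    mul_sum_fiber_eq_iff (offCoords u) (curMarg_pos hpos) (Tj k · y)).trans ?_
  simp only [offCoords_eq_iff]
  exact ⟨fun h c c' hc y => h y c c' hc, fun h y c c' hc => h c c' hc y⟩

/-- For independent transitions and a full-support consistent pmf `p`,
the conditional independence Xᵢ ⊥ S'ⱼ | ((S,A) \ {Xᵢ}) holds iff the coordinate kernel Tⱼ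
takes equal values at any two current configurations differing only in coordinate i. -/
theorem fmdp_ci_iff_kernel_does_not_depend
    {ns na : ℕ} (Sv : Fin ns → Type) (Av : Fin na → Type)
    [∀ i, Fintype (Sv i)] [∀ i, DecidableEq (Sv i)] [∀ i, Nonempty (Sv i)]
    [∀ j, Fintype (Av j)] [∀ j, DecidableEq (Av j)] [∀ j, Nonempty (Av j)]
    (T : (∀ i, Sv i) → (∀ j, Av j) → (∀ k, Sv k) → ℝ)
    (hT0 : ∀ s a s', 0 ≤ T s a s') (hT1 : ∀ s a, ∑ s', T s a s' = 1)
    (Tj : ∀ k : Fin ns, (∀ i, Sv i) × (∀ j, Av j) → Sv k → ℝ)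
    (hTj0 : ∀ k c y, 0 ≤ Tj k c y) (hTj1 : ∀ k c, ∑ y, Tj k c y = 1)
    (hind : ∀ s a s', T s a s' = ∏ k, Tj k (s, a) (s' k))
    (p : (∀ v, fv Sv Av v) → ℝ)
    (hpos : ∀ x, 0 < p x) (hsum : ∑ x, p x = 1) (hcons : FConsistent p T) :
    ∀ (u : CurVar ns na) (k : Fin ns),
      CondIndep p {liftCur u} {(.inr (.inr k) : FVar ns na)}
        (curSet ns na \ {liftCur u}) ↔
      (∀ (c c' : (∀ i, Sv i) × (∀ j, Av j)),
        (∀ u' : CurVar ns na, u' ≠ u → curCoord c u' = curCoord c' u') →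
        ∀ y, Tj k c y = Tj k c' y) :=
  fmdp_ci_iff_kernel_does_not_depend_general Sv Av T Tj hTj1 hind p hpos hcons
end
end

section
/- Let X, Z, Y be finite nonempty types and let p and q be two full-support joint probability mass functions on X × Z × Y whose conditional laws of Y given (X, Z) coincide: p(y | x, z) = q(y | x, z) for all x, z, y. Then the conditional independence X ⊥_p Y | Z holds if and only if X ⊥_q Y | Z holds. -/
open Finset

private lemma ci_key
    (X Z Y : Type*) [Fintype X] [Fintype Z] [Fintype Y]
    [Nonempty X] [Nonempty Z] [Nonempty Y]
    (p : X × Z × Y → ℝ) (hppos : ∀ w, 0 < p w) :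
    (∀ x z y, p (x, z, y) * (∑ x', ∑ y', p (x', z, y')) =
        (∑ y', p (x, z, y')) * (∑ x', p (x', z, y))) ↔
    (∀ x x' z y, p (x, z, y) / (∑ y', p (x, z, y')) =
        p (x', z, y) / (∑ y', p (x', z, y'))) := by
  have hA : ∀ x z, 0 < ∑ y', p (x, z, y') :=
    fun x z => Finset.sum_pos (fun y _ => hppos _) univ_nonempty
  have hT : ∀ z, 0 < ∑ x', ∑ y', p (x', z, y') :=
    fun z => Finset.sum_pos (fun x _ => hA x z) univ_nonempty
  constructor
  · intro h x x' z y
    have h1 := h x z y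
    have h2 := h x' z y
    rw [div_eq_div_iff (hA x z).ne' (hA x' z).ne']
    have h3 : (p (x, z, y) * ∑ y', p (x', z, y')) * (∑ x', ∑ y', p (x', z, y')) =
        (p (x', z, y) * ∑ y', p (x, z, y')) * (∑ x', ∑ y', p (x', z, y')) := by
      linear_combination (∑ y', p (x', z, y')) * h1 - (∑ y', p (x, z, y')) * h2
    exact mul_right_cancel₀ (hT z).ne' h3
  · intro h x z y
    obtain ⟨x₀⟩ := ‹Nonempty X›
    set c : Z → Y → ℝ := fun z y => p (x₀, z, y) / (∑ y', p (x₀, z, y')) with hc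
    have hp : ∀ x z y, p (x, z, y) = (∑ y', p (x, z, y')) * c z y := by
      intro x z y
      have hx := h x x₀ z y
      rw [div_eq_iff (hA x z).ne'] at hx
      rw [mul_comm] at hx
      exact hx
    have hB : (∑ x', p (x', z, y)) = (∑ x', ∑ y', p (x', z, y')) * c z y := by
      rw [Finset.sum_mul]
      exact Finset.sum_congr rfl fun x' _ => hp x' z y
    rw [hp x z y, hB]
    ring

/-- Two full-support joint pmfs on X × Z × Y with the same conditional law
of Y given (X, Z) agree on whether the conditional independence X ⊥ Y | Z holds.
Here conditional independence is stated in the cross-multiplied form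
p(x,y,z)·p(z) = p(x,z)·p(y,z), with marginals given by sums. -/
theorem ci_transfers_along_shared_conditional
    (X Z Y : Type*) [Fintype X] [Fintype Z] [Fintype Y]
    [Nonempty X] [Nonempty Z] [Nonempty Y]
    (p q : X × Z × Y → ℝ)
    (hppos : ∀ w, 0 < p w) (hpsum : ∑ w, p w = 1)
    (hqpos : ∀ w, 0 < q w) (hqsum : ∑ w, q w = 1)
    (hcond : ∀ x z y, p (x, z, y) / (∑ y', p (x, z, y')) =
      q (x, z, y) / (∑ y', q (x, z, y'))) :
    ((∀ x z y, p (x, z, y) * (∑ x', ∑ y', p (x', z, y')) =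
        (∑ y', p (x, z, y')) * (∑ x', p (x', z, y))) ↔
     (∀ x z y, q (x, z, y) * (∑ x', ∑ y', q (x', z, y')) =
        (∑ y', q (x, z, y')) * (∑ x', q (x', z, y)))) := by
  rw [ci_key X Z Y p hppos, ci_key X Z Y q hqpos]
  constructor
  · intro h x x' z y
    rw [← hcond, ← hcond]; exact h x x' z y
  · intro h x x' z y
    rw [hcond, hcond]; exact h x x' z y
end

section
/- Consider an object-oriented FMDP with independent transitions whose transition kernel satisfies result symmetry and causation symmetry. Then the dependence structure of the coordinate kernels is class-symmetric in the following three senses. (Local sharing, using result symmetry) For any two instances O_a, O_b of a common class C, any field U and state field V of C: T_{a,V} depends on the coordinate O_a.U if and only if T_{b,V} depends on the coordinate O_b.U. (Global target sharing, using result symmetry) For any two instances O_i, O_j of a common class C_k with state field V, and any object O_r with r ≠ i and r ≠ j with field U: T_{i,V} depends on the coordinate O_r.U if and only if T_{j,V} depends on the coordinate O_r.U. (Global source sharing, using causation symmetry) For any object O_i with state field V and any two instances O_a, O_b of a common class with a ≠ i, b ≠ i and field U: T_{i,V} depends on the coordinate O_a.U if and only if T_{i,V} depends on the coordinate O_b.U.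 -/
open Finset

noncomputable section

/-- The specification of an object-oriented FMDP: `K` classes, class `k` having `Nk k`
instances, state fields `SF k` and action fields `AF k`, with finite nonempty value types. -/
structure OOSpec where
  K : ℕ
  Nk : Fin K → ℕ
  SF : Fin K → Type
  AF : Fin K → Type
  SVal : ∀ k, SF k → Type
  AVal : ∀ k, AF k → Type
  finSF : ∀ k, Fintype (SF k)
  finAF : ∀ k, Fintype (AF k)
  deqSF : ∀ k, DecidableEq (SF k)
  deqAF : ∀ k, DecidableEq (AF k)
  finSVal : ∀ k u, Fintype (SVal k u)
  finAVal : ∀ k v, Fintype (AVal k v)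
  deqSVal : ∀ k u, DecidableEq (SVal k u)
  deqAVal : ∀ k v, DecidableEq (AVal k v)
  neSVal : ∀ k u, Nonempty (SVal k u)
  neAVal : ∀ k v, Nonempty (AVal k v)

attribute [instance] OOSpec.finSF OOSpec.finAF OOSpec.deqSF OOSpec.deqAF
  OOSpec.finSVal OOSpec.finAVal OOSpec.deqSVal OOSpec.deqAVal
  OOSpec.neSVal OOSpec.neAVal

namespace OOSpec

variable (σ : OOSpec)

/-- Objects: the `m`-th instance of class `k`. -/
abbrev ObjIdx := Σ k : Fin σ.K, Fin (σ.Nk k)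

/-- The fields of class `k`: state fields and action fields. -/
abbrev Fd (k : Fin σ.K) := σ.SF k ⊕ σ.AF k

/-- Value type of each field of class `k`. -/
def fval (k : Fin σ.K) : σ.Fd k → Type := Sum.elim (σ.SVal k) (σ.AVal k)

instance (k : Fin σ.K) : ∀ f : σ.Fd k, Fintype (σ.fval k f)
  | .inl u => inferInstanceAs (Fintype (σ.SVal k u))
  | .inr v => inferInstanceAs (Fintype (σ.AVal k v))

instance (k : Fin σ.K) : ∀ f : σ.Fd k, DecidableEq (σ.fval k f)
  | .inl u => inferInstanceAs (DecidableEq (σ.SVal k u))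
  | .inr v => inferInstanceAs (DecidableEq (σ.AVal k v))

/-- The attribute tuple of an instance of class `k`. -/
abbrev Obj (k : Fin σ.K) := ∀ f : σ.Fd k, σ.fval k f

/-- Current configurations: an attribute tuple for every object. -/
abbrev Cur := ∀ o : σ.ObjIdx, σ.Obj o.1

/-- Next-step configurations: values of all next-step state attributes. -/
abbrev Nxt := ∀ o : σ.ObjIdx, ∀ u : σ.SF o.1, σ.SVal o.1 u

theorem fst_swap (a b o : σ.ObjIdx) (h : a.1 = b.1) :
    (Equiv.swap a b o).1 = o.1 := by
  rcases eq_or_ne o a with rfl | ha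
  · rw [Equiv.swap_apply_left]; exact h.symm
  · rcases eq_or_ne o b with rfl | hb
    · rw [Equiv.swap_apply_right]; exact h
    · rw [Equiv.swap_apply_of_ne_of_ne ha hb]

/-- The involution σ_{ab} on current configurations exchanging the attribute tuples of
two instances `a` and `b` of a common class. -/
def swapCur (a b : σ.ObjIdx) (h : a.1 = b.1) (w : σ.Cur) : σ.Cur :=
  fun o => cast (congrArg σ.Obj (σ.fst_swap a b o h)) (w (Equiv.swap a b o))

/-- The conditional law, under `T`, of object `o`'s next-step state attributes at `w`. -/
def objLaw (T : σ.Cur → σ.Nxt → ℝ) (o : σ.ObjIdx) (w : σ.Cur)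
    (y : ∀ u : σ.SF o.1, σ.SVal o.1 u) : ℝ :=
  ∑ x' : σ.Nxt, if x' o = y then T w x' else 0

/-- The marginal of `T(· | w)` on the single next-step coordinate `O_o.u'`
(the coordinate kernel `T_{o,u}`). -/
def coordKer (T : σ.Cur → σ.Nxt → ℝ) (o : σ.ObjIdx) (u : σ.SF o.1) (w : σ.Cur)
    (y : σ.SVal o.1 u) : ℝ :=
  ∑ x' : σ.Nxt, if x' o u = y then T w x' else 0

/-- `T` has independent transitions: it factorizes over the next-step coordinates as the
product of its coordinate kernels. -/
def IndepTrans (T : σ.Cur → σ.Nxt → ℝ) : Prop :=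
  ∀ (w : σ.Cur) (x' : σ.Nxt),
    T w x' = ∏ ou : Σ o : σ.ObjIdx, σ.SF o.1, σ.coordKer T ou.1 ou.2 w (x' ou.1 ou.2)

/-- A function of the current configuration depends on the current-step coordinate
`O_j.f`: it takes different values at two configurations differing only in that coordinate. -/
def DependsOn {α : Type*} (κ : σ.Cur → α) (j : σ.ObjIdx) (f : σ.Fd j.1) : Prop :=
  ∃ w w' : σ.Cur,
    (∀ (o : σ.ObjIdx) (g : σ.Fd o.1),
      (⟨o, g⟩ : Σ o : σ.ObjIdx, σ.Fd o.1) ≠ ⟨j, f⟩ → w o g = w' o g) ∧ κ w ≠ κ w'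

/-- Result symmetry: instances of a common class transit by the same rule. -/
def ResultSym (T : σ.Cur → σ.Nxt → ℝ) : Prop :=
  ∀ (k : Fin σ.K) (m m' : Fin (σ.Nk k)) (w : σ.Cur) (y : ∀ u : σ.SF k, σ.SVal k u),
    σ.objLaw T ⟨k, m⟩ w y = σ.objLaw T ⟨k, m'⟩ (σ.swapCur ⟨k, m⟩ ⟨k, m'⟩ rfl w) y

/-- Causation symmetry: two other instances of a common class are interchangeable for the
transition of any object. -/
def CausSym (T : σ.Cur → σ.Nxt → ℝ) : Prop :=
  ∀ (i : σ.ObjIdx) (k : Fin σ.K) (m m' : Fin (σ.Nk k)),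
    (⟨k, m⟩ : σ.ObjIdx) ≠ i → (⟨k, m'⟩ : σ.ObjIdx) ≠ i →
    ∀ (w : σ.Cur) (y : ∀ u : σ.SF i.1, σ.SVal i.1 u),
      σ.objLaw T i w y = σ.objLaw T i (σ.swapCur ⟨k, m⟩ ⟨k, m'⟩ rfl w) y

end OOSpec

section Aux

variable (σ : OOSpec)

lemma aux_swapCur_apply (a b : σ.ObjIdx) (h : a.1 = b.1) (w : σ.Cur)
    (o o' : σ.ObjIdx) (he : Equiv.swap a b o = o') (hfst : o'.1 = o.1) :
    σ.swapCur a b h w o = cast (congrArg σ.Obj hfst) (w o') := by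
  subst he
  rfl

lemma aux_depends_transfer {α : Type*} (k : Fin σ.K) (m m' : Fin (σ.Nk k))
    (κ₁ κ₂ : σ.Cur → α)
    (hs : ∀ w, κ₁ w = κ₂ (σ.swapCur ⟨k, m⟩ ⟨k, m'⟩ rfl w))
    (l : Fin σ.K) (n n' : Fin (σ.Nk l))
    (he : Equiv.swap (⟨k, m⟩ : σ.ObjIdx) ⟨k, m'⟩ ⟨l, n⟩ = ⟨l, n'⟩)
    (f : σ.Fd l) :
    σ.DependsOn κ₁ ⟨l, n⟩ f → σ.DependsOn κ₂ ⟨l, n'⟩ f := by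
  rintro ⟨w, w', hww, hne⟩
  refine ⟨σ.swapCur ⟨k, m⟩ ⟨k, m'⟩ rfl w, σ.swapCur ⟨k, m⟩ ⟨k, m'⟩ rfl w', ?_, ?_⟩
  · intro o g hog
    rcases eq_or_ne (Equiv.swap (⟨k, m⟩ : σ.ObjIdx) ⟨k, m'⟩ o) ⟨l, n⟩ with hsw | hsw
    · have ho : o = ⟨l, n'⟩ := by
        have h2 := congrArg (Equiv.swap (⟨k, m⟩ : σ.ObjIdx) ⟨k, m'⟩) hsw
        rwa [Equiv.swap_apply_self, he] at h2
      subst ho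
      have h1 : σ.swapCur ⟨k, m⟩ ⟨k, m'⟩ rfl w ⟨l, n'⟩ = w ⟨l, n⟩ :=
        aux_swapCur_apply σ ⟨k, m⟩ ⟨k, m'⟩ rfl w ⟨l, n'⟩ ⟨l, n⟩ hsw rfl
      have h2 : σ.swapCur ⟨k, m⟩ ⟨k, m'⟩ rfl w' ⟨l, n'⟩ = w' ⟨l, n⟩ :=
        aux_swapCur_apply σ ⟨k, m⟩ ⟨k, m'⟩ rfl w' ⟨l, n'⟩ ⟨l, n⟩ hsw rfl
      rw [h1, h2]
      have hgf : g ≠ f := by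
        intro hg; subst hg; exact hog rfl
      apply hww
      intro hc
      exact hgf (eq_of_heq (Sigma.mk.inj_iff.mp hc).2)
    · have hval : w (Equiv.swap (⟨k, m⟩ : σ.ObjIdx) ⟨k, m'⟩ o)
          = w' (Equiv.swap (⟨k, m⟩ : σ.ObjIdx) ⟨k, m'⟩ o) := by
        funext g'
        apply hww
        intro hc
        exact hsw (congrArg Sigma.fst hc)
      show σ.swapCur ⟨k, m⟩ ⟨k, m'⟩ rfl w o g = σ.swapCur ⟨k, m⟩ ⟨k, m'⟩ rfl w' o g
      unfold OOSpec.swapCur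
      rw [hval]
  · rw [← hs w, ← hs w']
    exact hne

lemma aux_coordKer_eq (T : σ.Cur → σ.Nxt → ℝ) (o : σ.ObjIdx) (u : σ.SF o.1)
    (w : σ.Cur) (y : σ.SVal o.1 u) :
    σ.coordKer T o u w y =
      ∑ z : ∀ v : σ.SF o.1, σ.SVal o.1 v, if z u = y then σ.objLaw T o w z else 0 := by
  unfold OOSpec.coordKer OOSpec.objLaw
  have key : ∀ z : ∀ v : σ.SF o.1, σ.SVal o.1 v,
      (if z u = y then ∑ x' : σ.Nxt, (if x' o = z then T w x' else 0) else 0)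
        = ∑ x' : σ.Nxt, (if x' o = z then (if z u = y then T w x' else 0) else 0) := by
    intro z
    split <;> simp_all
  rw [Finset.sum_congr rfl fun z _ => key z, Finset.sum_comm]
  refine Finset.sum_congr rfl fun x' _ => ?_
  rw [Finset.sum_ite_eq]
  simp


lemma aux_coordKer_res (T : σ.Cur → σ.Nxt → ℝ) (hres : σ.ResultSym T)
    (k : Fin σ.K) (m m' : Fin (σ.Nk k)) (V : σ.SF k) (w : σ.Cur) :
    σ.coordKer T ⟨k, m⟩ V w = σ.coordKer T ⟨k, m'⟩ V (σ.swapCur ⟨k, m⟩ ⟨k, m'⟩ rfl w) := by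
  funext y
  rw [aux_coordKer_eq, aux_coordKer_eq]
  refine Finset.sum_congr rfl fun z _ => ?_
  rw [hres k m m' w z]

lemma aux_coordKer_caus (T : σ.Cur → σ.Nxt → ℝ) (hcaus : σ.CausSym T)
    (i : σ.ObjIdx) (V : σ.SF i.1) (l : Fin σ.K) (ma mb : Fin (σ.Nk l))
    (ha : (⟨l, ma⟩ : σ.ObjIdx) ≠ i) (hb : (⟨l, mb⟩ : σ.ObjIdx) ≠ i) (w : σ.Cur) :
    σ.coordKer T i V w = σ.coordKer T i V (σ.swapCur ⟨l, ma⟩ ⟨l, mb⟩ rfl w) := by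
  funext y
  rw [aux_coordKer_eq, aux_coordKer_eq]
  refine Finset.sum_congr rfl fun z _ => ?_
  rw [hcaus i l ma mb ha hb w z]

end Aux

open OOSpec in
/-- In an OO-FMDP with independent transitions, result symmetry and
causation symmetry, the dependence structure of the coordinate kernels is class-symmetric:
local sharing, global target sharing, and global source sharing. -/
theorem oo_fmdp_dependence_is_class_symmetric
    (σ : OOSpec) (T : σ.Cur → σ.Nxt → ℝ)
    (hT0 : ∀ w x', 0 ≤ T w x') (hT1 : ∀ w, ∑ x', T w x' = 1)
    (hind : σ.IndepTrans T) (hres : σ.ResultSym T) (hcaus : σ.CausSym T) :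
    -- local sharing (result symmetry)
    (∀ (k : Fin σ.K) (m m' : Fin (σ.Nk k)) (U : σ.Fd k) (V : σ.SF k),
      σ.DependsOn (σ.coordKer T ⟨k, m⟩ V) ⟨k, m⟩ U ↔
      σ.DependsOn (σ.coordKer T ⟨k, m'⟩ V) ⟨k, m'⟩ U) ∧
    -- global target sharing (result symmetry)
    (∀ (k : Fin σ.K) (mi mj : Fin (σ.Nk k)) (V : σ.SF k)
      (r : σ.ObjIdx) (U : σ.Fd r.1),
      r ≠ ⟨k, mi⟩ → r ≠ ⟨k, mj⟩ →
      (σ.DependsOn (σ.coordKer T ⟨k, mi⟩ V) r U ↔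
       σ.DependsOn (σ.coordKer T ⟨k, mj⟩ V) r U)) ∧
    -- global source sharing (causation symmetry)
    (∀ (i : σ.ObjIdx) (V : σ.SF i.1) (l : Fin σ.K) (ma mb : Fin (σ.Nk l)) (U : σ.Fd l),
      (⟨l, ma⟩ : σ.ObjIdx) ≠ i → (⟨l, mb⟩ : σ.ObjIdx) ≠ i →
      (σ.DependsOn (σ.coordKer T i V) ⟨l, ma⟩ U ↔
       σ.DependsOn (σ.coordKer T i V) ⟨l, mb⟩ U)) := by
  
  refine ⟨?_, ?_, ?_⟩
  · intro k m m' U V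
    constructor
    · exact aux_depends_transfer σ k m m' _ _
        (fun w => aux_coordKer_res σ T hres k m m' V w) k m m'
        (Equiv.swap_apply_left _ _) U
    · exact aux_depends_transfer σ k m' m _ _
        (fun w => aux_coordKer_res σ T hres k m' m V w) k m' m
        (Equiv.swap_apply_left _ _) U
  · intro k mi mj V r
    obtain ⟨rl, rn⟩ := r
    intro U hri hrj
    constructor
    · exact aux_depends_transfer σ k mi mj _ _
        (fun w => aux_coordKer_res σ T hres k mi mj V w) rl rn rn
        (Equiv.swap_apply_of_ne_of_ne hri hrj) U
    · exact aux_depends_transfer σ k mj mi _ _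
        (fun w => aux_coordKer_res σ T hres k mj mi V w) rl rn rn
        (Equiv.swap_apply_of_ne_of_ne hrj hri) U
  · intro i V l ma mb U ha hb
    constructor
    · exact aux_depends_transfer σ l ma mb _ _
        (fun w => aux_coordKer_caus σ T hcaus i V l ma mb ha hb w) l ma mb
        (Equiv.swap_apply_left _ _) U
    · exact aux_depends_transfer σ l mb ma _ _
        (fun w => aux_coordKer_caus σ T hcaus i V l mb ma hb ha w) l mb ma
        (Equiv.swap_apply_left _ _) U
end
end

section
/- Consider an object-oriented FMDP with independent transitions whose transition kernel T satisfies result symmetry. Let O_a, O_b be instances of a common class C, let U be a field and V a state field of C. Let p be a full-support joint probability mass function on (S, A, S') consistent with T, and let q be the joint probability mass function whose current-step marginal is q(current = w) := p(current = σ_{ab}(w)) and which is consistent with the same transition kernel T. If the conditional independence O_a.U ⊥_p O_a.V' | ((S, A) \ {O_a.U}) holds, then O_b.U ⊥_q O_b.V' | ((S, A) \ {O_b.U}) holds. -/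
open Finset

noncomputable section

namespace OOSpec

variable (σ : OOSpec)

/-- Current-step coordinates: the attribute `O_o.f`. -/
abbrev CurV := Σ o : σ.ObjIdx, σ.Fd o.1

/-- Next-step coordinates: the attribute `O_o.u'`. -/
abbrev NxtV := Σ o : σ.ObjIdx, σ.SF o.1

/-- All variables of the OO-FMDP. -/
abbrev Var := σ.CurV ⊕ σ.NxtV

/-- Value type of each variable. -/
def vval : σ.Var → Type
  | .inl v => σ.fval v.1.1 v.2
  | .inr v => σ.SVal v.1.1 v.2

instance : ∀ v : σ.Var, Fintype (σ.vval v)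
  | .inl v => inferInstanceAs (Fintype (σ.fval v.1.1 v.2))
  | .inr v => inferInstanceAs (Fintype (σ.SVal v.1.1 v.2))

instance : ∀ v : σ.Var, DecidableEq (σ.vval v)
  | .inl v => inferInstanceAs (DecidableEq (σ.fval v.1.1 v.2))
  | .inr v => inferInstanceAs (DecidableEq (σ.SVal v.1.1 v.2))

/-- Full configurations of all variables. -/
abbrev Cfg := ∀ v : σ.Var, σ.vval v

/-- The current configuration determined by a full configuration. -/
def curOf (d : σ.Cfg) : σ.Cur := fun o f => d (.inl ⟨o, f⟩)

/-- The next-step configuration determined by a full configuration. -/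
def nxtOf (d : σ.Cfg) : σ.Nxt := fun o u => d (.inr ⟨o, u⟩)

/-- Building a full configuration from a current and a next configuration. -/
def mkCfg (w : σ.Cur) (x' : σ.Nxt) : σ.Cfg
  | .inl v => w v.1 v.2
  | .inr v => x' v.1 v.2

/-- The set of all current-step coordinates. -/
def curVars : Finset σ.Var := Finset.univ.image Sum.inl

/-- A joint pmf on (S, A, S') is consistent with the transition kernel `T`. -/
def Consistent (p : σ.Cfg → ℝ) (T : σ.Cur → σ.Nxt → ℝ) : Prop :=
  ∀ d : σ.Cfg, p d = marg p σ.curVars d * T (σ.curOf d) (σ.nxtOf d)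

end OOSpec

/-! Consistency with `T` factors the joint law of the current configuration and `O.V'` as
`p(current) · T_{O,V}(O.V' | current)`, where `T_{O,V}` is the coordinate kernel of `O.V'`.
Hence, for a full-support `p`, `O.U ⊥ O.V' | rest` holds exactly when `T_{O,V}` does not depend
on `O.U`, a property of `T` alone; and conversely that property yields the independence for
every pmf consistent with `T`. Result symmetry gives `T_{O_b,V} = T_{O_a,V} ∘ σ_{ba}`, and
`σ_{ba}` moves the coordinate `O_b.U` to `O_a.U`, so the property passes from `O_a` to `O_b`. -/

section Marginal

variable {ι : Type*} [Fintype ι] [DecidableEq ι] {val : ι → Type*}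
  [∀ i, Fintype (val i)] [∀ i, DecidableEq (val i)]

theorem marg_congr_s9 (p : (∀ i, val i) → ℝ) {E : Finset ι} {x x' : ∀ i, val i}
    (h : ∀ i ∈ E, x i = x' i) : marg p E x = marg p E x' := by
  unfold marg
  refine sum_congr rfl fun y _ => if_congr (forall₂_congr fun i hi => by rw [h i hi]) rfl rfl

theorem marg_pos_s9 {p : (∀ i, val i) → ℝ} (hp : ∀ x, 0 < p x) (E : Finset ι) (x : ∀ i, val i) :
    0 < marg p E x :=
  sum_pos' (fun y _ => by split_ifs <;> simp [(hp y).le])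
    ⟨x, mem_univ x, by simp [hp x]⟩

theorem marg_eq_sum_marg_insert (p : (∀ i, val i) → ℝ) {E : Finset ι} {a : ι} (ha : a ∉ E)
    (x : ∀ i, val i) :
    marg p E x = ∑ ξ : val a, marg p (insert a E) (Function.update x a ξ) := by
  have hcond : ∀ (y : ∀ i, val i) (ξ : val a),
      (∀ i ∈ insert a E, y i = Function.update x a ξ i) ↔ (y a = ξ ∧ ∀ i ∈ E, y i = x i) := by
    intro y ξ
    refine forall_mem_insert .. |>.trans (and_congr (by rw [Function.update_self]) ?_)
    exact forall₂_congr fun i hi => by rw [Function.update_of_ne (ne_of_mem_of_not_mem hi ha)]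
  simp only [marg, hcond, ite_and]
  rw [sum_comm]
  simp

theorem condIndep_singleton_iff (p : (∀ i, val i) → ℝ) (a b : ι) (Z : Finset ι) :
    CondIndep p {a} {b} Z ↔ ∀ x, marg p (insert a (insert b Z)) x * marg p Z x =
      marg p (insert a Z) x * marg p (insert b Z) x := by
  simp only [CondIndep, insert_eq, union_assoc]

variable {p : (∀ i, val i) → ℝ} {a b : ι} {Z : Finset ι} {k : (∀ i, val i) → ℝ}

theorem condIndep_of_marg_insert_eq_mul (ha : a ∉ Z) (hab : a ≠ b)
    (hk : ∀ x x', (∀ i ≠ a, x i = x' i) → k x = k x')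
    (hfac : ∀ x, marg p (insert a (insert b Z)) x = marg p (insert a Z) x * k x) :
    CondIndep p {a} {b} Z := by
  refine (condIndep_singleton_iff p a b Z).2 fun x => ?_
  have hbZ : marg p (insert b Z) x = k x * marg p Z x := by
    have ha' : a ∉ insert b Z := by simp [hab, ha]
    rw [marg_eq_sum_marg_insert p ha', marg_eq_sum_marg_insert p ha, mul_sum]
    refine sum_congr rfl fun ξ _ => ?_
    rw [hfac, mul_comm, hk _ x fun i hi => Function.update_of_ne hi ..]
  rw [hfac, hbZ]
  ring

theorem eq_of_condIndep_of_marg_insert_eq_mul (hp : ∀ x, 0 < p x) (ha : a ∉ Z) (hab : a ≠ b)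
    (hfac : ∀ x, marg p (insert a (insert b Z)) x = marg p (insert a Z) x * k x)
    (hci : CondIndep p {a} {b} Z) {x x' : ∀ i, val i} (hxx' : ∀ i ≠ a, x i = x' i) :
    k x = k x' := by
  have hk : ∀ y, k y = marg p (insert b Z) y / marg p Z y := fun y => by
    refine eq_div_of_mul_eq (marg_pos_s9 hp Z y).ne'
      (mul_left_cancel₀ (marg_pos_s9 hp (insert a Z) y).ne' ?_)
    rw [← mul_assoc, ← hfac, (condIndep_singleton_iff p a b Z).1 hci]
  have hne : ∀ i ∈ insert b Z, x i = x' i := fun i hi =>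
    hxx' i (by rintro rfl; simp [hab, ha] at hi)
  rw [hk, hk, marg_congr_s9 p hne, marg_congr_s9 p fun i hi => hne i (mem_insert_of_mem hi)]

end Marginal

namespace OOSpec

variable {σ : OOSpec}

def cfgEquiv (σ : OOSpec) : σ.Cur × σ.Nxt ≃ σ.Cfg where
  toFun z := σ.mkCfg z.1 z.2
  invFun d := (σ.curOf d, σ.nxtOf d)
  left_inv _ := rfl
  right_inv _ := funext fun | .inl _ => rfl | .inr _ => rfl

theorem sum_cfg (F : σ.Cfg → ℝ) : ∑ d, F d = ∑ w, ∑ n, F (σ.mkCfg w n) := by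
  rw [← σ.cfgEquiv.sum_comp, Fintype.sum_prod_type]
  rfl

@[simp] theorem curOf_mkCfg (w : σ.Cur) (n : σ.Nxt) : σ.curOf (σ.mkCfg w n) = w := rfl

@[simp] theorem nxtOf_mkCfg (w : σ.Cur) (n : σ.Nxt) : σ.nxtOf (σ.mkCfg w n) = n := rfl

@[simp] theorem mkCfg_inr (w : σ.Cur) (n : σ.Nxt) (o : σ.ObjIdx) (u : σ.SF o.1) :
    σ.mkCfg w n (.inr ⟨o, u⟩) = n o u := rfl

theorem forall_mem_curVars_eq_iff {y d : σ.Cfg} :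
    (∀ v ∈ σ.curVars, y v = d v) ↔ σ.curOf y = σ.curOf d := by
  simp only [curVars, forall_mem_image, mem_univ, true_implies, funext_iff, curOf, Sigma.forall]
  exact Iff.rfl

theorem marg_insert_inr_eq_mul {T : σ.Cur → σ.Nxt → ℝ} {r : σ.Cfg → ℝ} (hr : σ.Consistent r T)
    (o : σ.ObjIdx) (u : σ.SF o.1) (d : σ.Cfg) :
    marg r (insert (.inr ⟨o, u⟩) σ.curVars) d =
      marg r σ.curVars d * σ.coordKer T o u (σ.curOf d) (d (.inr ⟨o, u⟩)) := by
  conv_lhs => unfold marg; simp only [forall_mem_insert, forall_mem_curVars_eq_iff]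
  calc _ = ∑ y : σ.Cfg, if y (.inr ⟨o, u⟩) = d (.inr ⟨o, u⟩) ∧ σ.curOf y = σ.curOf d then
          marg r σ.curVars d * T (σ.curOf d) (σ.nxtOf y) else 0 := by
        refine sum_congr rfl fun y _ => ?_
        split_ifs with h
        · rw [hr y, h.2, marg_congr_s9 r (forall_mem_curVars_eq_iff.2 h.2)]
        · rfl
    _ = _ := by
      simp only [sum_cfg, curOf_mkCfg, nxtOf_mkCfg, mkCfg_inr, and_comm (b := _ = σ.curOf d),
        ite_and]
      rw [Fintype.sum_eq_single (σ.curOf d) fun w hw => by simp only [hw, if_false, sum_const_zero]]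
      simp only [if_true, coordKer, mul_sum, mul_ite, mul_zero]
      -- the sides differ only in the `DecidableEq` instances of `σ.vval (.inr _)` and `σ.SVal`
      rfl

theorem coordKer_eq_sum_objLaw (T : σ.Cur → σ.Nxt → ℝ) (o : σ.ObjIdx) (u : σ.SF o.1)
    (w : σ.Cur) (y : σ.SVal o.1 u) :
    σ.coordKer T o u w y = ∑ z, if z u = y then σ.objLaw T o w z else 0 := by
  simp only [coordKer, objLaw, ← sum_filter]
  rw [sum_fiberwise_eq_sum_filter]
  simp only [mem_filter, mem_univ, true_and]

theorem swapCur_heq (a b o : σ.ObjIdx) (h : a.1 = b.1) (w : σ.Cur) :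
    HEq (σ.swapCur a b h w o) (w (Equiv.swap a b o)) :=
  cast_heq _ _

theorem swapCur_apply_left (k : Fin σ.K) (i j : Fin (σ.Nk k)) (w : σ.Cur) :
    σ.swapCur ⟨k, i⟩ ⟨k, j⟩ rfl w ⟨k, i⟩ = w ⟨k, j⟩ :=
  eq_of_heq ((swapCur_heq ⟨k, i⟩ ⟨k, j⟩ _ rfl w).trans
    (congr_arg_heq w (Equiv.swap_apply_left _ _)))

theorem swapCur_apply_right (k : Fin σ.K) (i j : Fin (σ.Nk k)) (w : σ.Cur) :
    σ.swapCur ⟨k, i⟩ ⟨k, j⟩ rfl w ⟨k, j⟩ = w ⟨k, i⟩ :=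
  eq_of_heq ((swapCur_heq ⟨k, i⟩ ⟨k, j⟩ _ rfl w).trans
    (congr_arg_heq w (Equiv.swap_apply_right _ _)))

theorem swapCur_apply_of_ne (k : Fin σ.K) (i j : Fin (σ.Nk k)) (w : σ.Cur) {o : σ.ObjIdx}
    (hi : o ≠ ⟨k, i⟩) (hj : o ≠ ⟨k, j⟩) : σ.swapCur ⟨k, i⟩ ⟨k, j⟩ rfl w o = w o :=
  eq_of_heq ((swapCur_heq ⟨k, i⟩ ⟨k, j⟩ o rfl w).trans
    (congr_arg_heq w (Equiv.swap_apply_of_ne_of_ne hi hj)))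

theorem swapCur_eq_off {k : Fin σ.K} {i j : Fin (σ.Nk k)} {f : σ.Fd k} {w w' : σ.Cur}
    (h : ∀ (o : σ.ObjIdx) (g : σ.Fd o.1), (⟨o, g⟩ : σ.CurV) ≠ ⟨⟨k, i⟩, f⟩ → w o g = w' o g)
    (o : σ.ObjIdx) (g : σ.Fd o.1) (hog : (⟨o, g⟩ : σ.CurV) ≠ ⟨⟨k, j⟩, f⟩) :
    σ.swapCur ⟨k, i⟩ ⟨k, j⟩ rfl w o g = σ.swapCur ⟨k, i⟩ ⟨k, j⟩ rfl w' o g := by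
  rcases eq_or_ne o ⟨k, j⟩ with rfl | hj
  · rw [swapCur_apply_right, swapCur_apply_right]
    exact h ⟨k, i⟩ g (by simpa using hog)
  rcases eq_or_ne o ⟨k, i⟩ with rfl | hi
  · have hij : i ≠ j := by simpa using hj
    rw [swapCur_apply_left, swapCur_apply_left]
    exact h ⟨k, j⟩ g (by simp [hij.symm])
  · rw [swapCur_apply_of_ne k i j w hi hj, swapCur_apply_of_ne k i j w' hi hj]
    exact h o g (by simp [hi])

theorem DependsOn.of_comp_swapCur {α : Type*} {κ : σ.Cur → α} {k : Fin σ.K}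
    {i j : Fin (σ.Nk k)} {f : σ.Fd k}
    (h : σ.DependsOn (κ ∘ σ.swapCur ⟨k, i⟩ ⟨k, j⟩ rfl) ⟨k, i⟩ f) : σ.DependsOn κ ⟨k, j⟩ f :=
  let ⟨_, _, hww', hne⟩ := h
  ⟨_, _, swapCur_eq_off hww', hne⟩

theorem coordKer_eq_comp_swapCur {T : σ.Cur → σ.Nxt → ℝ} (hres : σ.ResultSym T)
    (k : Fin σ.K) (i j : Fin (σ.Nk k)) (V : σ.SF k) :
    σ.coordKer T ⟨k, i⟩ V = σ.coordKer T ⟨k, j⟩ V ∘ σ.swapCur ⟨k, i⟩ ⟨k, j⟩ rfl := by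
  funext w y
  simp only [Function.comp, coordKer_eq_sum_objLaw, hres k i j w]

theorem not_dependsOn_coordKer_iff (T : σ.Cur → σ.Nxt → ℝ) (j : σ.ObjIdx) (U : σ.Fd j.1)
    (V : σ.SF j.1) :
    ¬ σ.DependsOn (σ.coordKer T j V) j U ↔ ∀ x x' : σ.Cfg, (∀ v ≠ .inl ⟨j, U⟩, x v = x' v) →
      σ.coordKer T j V (σ.curOf x) (x (.inr ⟨j, V⟩)) =
        σ.coordKer T j V (σ.curOf x') (x' (.inr ⟨j, V⟩)) := by
  constructor
  · intro h x x' hxx'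
    have hcur : σ.coordKer T j V (σ.curOf x) = σ.coordKer T j V (σ.curOf x') := by
      by_contra hne
      exact h ⟨_, _, fun o g hog => hxx' _ (Sum.inl_injective.ne hog), hne⟩
    rw [hcur, hxx' _ Sum.inr_ne_inl]
  · rintro h ⟨w, w', hww', hne⟩
    refine hne (funext fun y => ?_)
    let n₀ : σ.Nxt := Classical.arbitrary _
    let n : σ.Nxt := Function.update n₀ j (Function.update (n₀ j) V y)
    have hy : n j V = y := by simp [n]
    rw [← hy]
    refine h (σ.mkCfg w n) (σ.mkCfg w' n) ?_
    rintro (c | c) hc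
    · exact hww' c.1 c.2 fun h => hc (congrArg _ h)
    · rfl

theorem marg_insert_insert_sdiff_eq_mul {T : σ.Cur → σ.Nxt → ℝ} {r : σ.Cfg → ℝ}
    (hr : σ.Consistent r T) (j : σ.ObjIdx) (U : σ.Fd j.1) (V : σ.SF j.1) (x : σ.Cfg) :
    marg r (insert (.inl ⟨j, U⟩) (insert (.inr ⟨j, V⟩) (σ.curVars \ {.inl ⟨j, U⟩}))) x =
      marg r (insert (.inl ⟨j, U⟩) (σ.curVars \ {.inl ⟨j, U⟩})) x *
        σ.coordKer T j V (σ.curOf x) (x (.inr ⟨j, V⟩)) := by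
  have hU : (.inl ⟨j, U⟩ : σ.Var) ∈ σ.curVars := mem_image_of_mem _ (mem_univ _)
  rw [insert_comm, insert_sdiff_self_of_mem hU, marg_insert_inr_eq_mul hr]

theorem condIndep_of_not_dependsOn {T : σ.Cur → σ.Nxt → ℝ} {r : σ.Cfg → ℝ}
    (hr : σ.Consistent r T) {j : σ.ObjIdx} {U : σ.Fd j.1} {V : σ.SF j.1}
    (h : ¬ σ.DependsOn (σ.coordKer T j V) j U) :
    CondIndep r {.inl ⟨j, U⟩} {.inr ⟨j, V⟩} (σ.curVars \ {.inl ⟨j, U⟩}) :=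
  condIndep_of_marg_insert_eq_mul (by simp) Sum.inl_ne_inr
    ((not_dependsOn_coordKer_iff T j U V).1 h) (marg_insert_insert_sdiff_eq_mul hr j U V)

theorem not_dependsOn_of_condIndep {T : σ.Cur → σ.Nxt → ℝ} {r : σ.Cfg → ℝ}
    (hr : σ.Consistent r T) (hpos : ∀ d, 0 < r d) {j : σ.ObjIdx} {U : σ.Fd j.1}
    {V : σ.SF j.1} (hci : CondIndep r {.inl ⟨j, U⟩} {.inr ⟨j, V⟩} (σ.curVars \ {.inl ⟨j, U⟩})) :
    ¬ σ.DependsOn (σ.coordKer T j V) j U :=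
  (not_dependsOn_coordKer_iff T j U V).2 fun _ _ =>
    eq_of_condIndep_of_marg_insert_eq_mul hpos (by simp) Sum.inl_ne_inr
      (marg_insert_insert_sdiff_eq_mul hr j U V) hci

end OOSpec

open OOSpec in
theorem oo_fmdp_local_ci_transfers_by_result_symmetry_general
    (σ : OOSpec) (T : σ.Cur → σ.Nxt → ℝ)
    (hres : σ.ResultSym T)
    (k : Fin σ.K) (m m' : Fin (σ.Nk k)) (U : σ.Fd k) (V : σ.SF k)
    (p q : σ.Cfg → ℝ)
    (hppos : ∀ d, 0 < p d) (hpcons : σ.Consistent p T)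
    (hqcons : σ.Consistent q T)
    (hci : CondIndep p {Sum.inl ⟨⟨k, m⟩, U⟩} {Sum.inr ⟨⟨k, m⟩, V⟩}
      (σ.curVars \ {Sum.inl ⟨⟨k, m⟩, U⟩})) :
    CondIndep q {Sum.inl ⟨⟨k, m'⟩, U⟩} {Sum.inr ⟨⟨k, m'⟩, V⟩}
      (σ.curVars \ {Sum.inl ⟨⟨k, m'⟩, U⟩}) := by
  have hm : ¬ σ.DependsOn (σ.coordKer T ⟨k, m⟩ V) ⟨k, m⟩ U :=
    not_dependsOn_of_condIndep hpcons hppos hci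
  refine condIndep_of_not_dependsOn hqcons fun hm' => hm ?_
  rw [coordKer_eq_comp_swapCur hres k m' m V] at hm'
  exact hm'.of_comp_swapCur

open OOSpec in
/-- In an OO-FMDP with independent transitions and result symmetry, if
`q` is the joint pmf whose current-step marginal is the σ_{ab}-pushforward of that of `p`
and which is consistent with the same kernel, then the conditional independence
O_a.U ⊥_p O_a.V' | ((S,A) \ {O_a.U}) transfers to O_b.U ⊥_q O_b.V' | ((S,A) \ {O_b.U}). -/
theorem oo_fmdp_local_ci_transfers_by_result_symmetry
    (σ : OOSpec) (T : σ.Cur → σ.Nxt → ℝ)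
    (hT0 : ∀ w x', 0 ≤ T w x') (hT1 : ∀ w, ∑ x', T w x' = 1)
    (hind : σ.IndepTrans T) (hres : σ.ResultSym T)
    (k : Fin σ.K) (m m' : Fin (σ.Nk k)) (U : σ.Fd k) (V : σ.SF k)
    (p q : σ.Cfg → ℝ)
    (hppos : ∀ d, 0 < p d) (hpsum : ∑ d, p d = 1) (hpcons : σ.Consistent p T)
    (hqcons : σ.Consistent q T)
    -- q(current = w) = p(current = σ_{ab}(w))
    (hqmarg : ∀ d : σ.Cfg, marg q σ.curVars d =
      marg p σ.curVars (σ.mkCfg (σ.swapCur ⟨k, m⟩ ⟨k, m'⟩ rfl (σ.curOf d)) (σ.nxtOf d)))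
    (hci : CondIndep p {Sum.inl ⟨⟨k, m⟩, U⟩} {Sum.inr ⟨⟨k, m⟩, V⟩}
      (σ.curVars \ {Sum.inl ⟨⟨k, m⟩, U⟩})) :
    CondIndep q {Sum.inl ⟨⟨k, m'⟩, U⟩} {Sum.inr ⟨⟨k, m'⟩, V⟩}
      (σ.curVars \ {Sum.inl ⟨⟨k, m'⟩, U⟩}) :=
  oo_fmdp_local_ci_transfers_by_result_symmetry_general σ T hres k m m' U V p q hppos hpcons hqcons
    hci
end
end

section
/- Let objects O_1, …, O_N be partitioned into classes C_1, …, C_K, where C_k has N_k instances and every instance of C_k has state attributes valued in a finite nonempty type and action attributes valued in a finite nonempty type, the same types for all instances of C_k. Let T be an arbitrary transition kernel assigning to each configuration of all objects' attributes a probability mass function on the product of all objects' next-step state-attribute spaces. Extend every instance of C_k by one additional state attribute Id valued in {1, …, N_k}. Then there exists a transition kernel T̃ on the extended configurations such that: (i) under T̃, with probability one every object's next-step Id equals its current Id; (ii) for every extended configuration in which, for each class C_k, the Ids of its instances are pairwise distinct, the law under T̃ of the non-Id next-step attributes equals the law under T of the next-step attributes of the configuration obtained by reindexing the instances of each class according to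 their Ids; and (iii) T̃ satisfies result symmetry and causation symmetry with respect to the extended attributes. -/
open Finset

noncomputable section

variable {K : ℕ} {Nk : Fin K → ℕ} {St Ac : Fin K → Type}

/-- Objects: the `m`-th instance of class `k`. -/
abbrev ObjIdx (Nk : Fin K → ℕ) := Σ k : Fin K, Fin (Nk k)

/-- Extended attribute tuple of an instance of class `k`: state attributes, the auxiliary
`Id` attribute (an extra state attribute), and action attributes. -/
abbrev ObjE (Nk : Fin K → ℕ) (St Ac : Fin K → Type) (k : Fin K) :=
  (St k × Fin (Nk k)) × Ac k

/-- Clean current configurations. -/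
abbrev CleanCur (Nk : Fin K → ℕ) (St Ac : Fin K → Type) :=
  ∀ o : ObjIdx Nk, St o.1 × Ac o.1

/-- Clean next-step configurations. -/
abbrev CleanNxt (Nk : Fin K → ℕ) (St : Fin K → Type) :=
  ∀ o : ObjIdx Nk, St o.1

/-- Extended current configurations. -/
abbrev ExtCur (Nk : Fin K → ℕ) (St Ac : Fin K → Type) :=
  ∀ o : ObjIdx Nk, ObjE Nk St Ac o.1

/-- Extended next-step configurations. -/
abbrev ExtNxt (Nk : Fin K → ℕ) (St : Fin K → Type) :=
  ∀ o : ObjIdx Nk, St o.1 × Fin (Nk o.1)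

theorem fst_swapObj (a b o : ObjIdx Nk) (h : a.1 = b.1) :
    (Equiv.swap a b o).1 = o.1 := by
  rcases eq_or_ne o a with rfl | ha
  · rw [Equiv.swap_apply_left]; exact h.symm
  · rcases eq_or_ne o b with rfl | hb
    · rw [Equiv.swap_apply_right]; exact h
    · rw [Equiv.swap_apply_of_ne_of_ne ha hb]

/-- The involution σ_{ab} on extended current configurations exchanging the attribute
tuples of two instances `a` and `b` of a common class. -/
def swapE (a b : ObjIdx Nk) (h : a.1 = b.1) (w : ExtCur Nk St Ac) : ExtCur Nk St Ac :=
  fun o => cast (congrArg (ObjE Nk St Ac) (fst_swapObj a b o h)) (w (Equiv.swap a b o))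

/-- The conditional law, under an extended kernel, of object `o`'s next-step state
attributes (including the `Id` attribute). -/
def objLawE [∀ k, Fintype (St k)] [∀ k, DecidableEq (St k)]
    (T' : ExtCur Nk St Ac → ExtNxt Nk St → ℝ) (o : ObjIdx Nk)
    (w : ExtCur Nk St Ac) (y : St o.1 × Fin (Nk o.1)) : ℝ :=
  ∑ x' : ExtNxt Nk St, if x' o = y then T' w x' else 0

/-- Result symmetry for the extended kernel. -/
def ResultSymE [∀ k, Fintype (St k)] [∀ k, DecidableEq (St k)]
    (T' : ExtCur Nk St Ac → ExtNxt Nk St → ℝ) : Prop :=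
  ∀ (k : Fin K) (m m' : Fin (Nk k)) (w : ExtCur Nk St Ac) (y : St k × Fin (Nk k)),
    objLawE T' ⟨k, m⟩ w y = objLawE T' ⟨k, m'⟩ (swapE ⟨k, m⟩ ⟨k, m'⟩ rfl w) y

/-- Causation symmetry for the extended kernel. -/
def CausSymE [∀ k, Fintype (St k)] [∀ k, DecidableEq (St k)]
    (T' : ExtCur Nk St Ac → ExtNxt Nk St → ℝ) : Prop :=
  ∀ (i : ObjIdx Nk) (k : Fin K) (m m' : Fin (Nk k)),
    (⟨k, m⟩ : ObjIdx Nk) ≠ i → (⟨k, m'⟩ : ObjIdx Nk) ≠ i →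
    ∀ (w : ExtCur Nk St Ac) (y : St i.1 × Fin (Nk i.1)),
      objLawE T' i w y = objLawE T' i (swapE ⟨k, m⟩ ⟨k, m'⟩ rfl w) y

-- ==================== AUX ====================
attribute [local instance] Classical.propDecidable

/-- Swap on extended next-step configurations. -/
def swapN (a b : ObjIdx Nk) (h : a.1 = b.1) (x : ExtNxt Nk St) : ExtNxt Nk St :=
  fun o => cast (congrArg (fun j => St j × Fin (Nk j)) (fst_swapObj a b o h)) (x (Equiv.swap a b o))

lemma swap_mk {k : Fin K} (m m' n : Fin (Nk k)) :
    Equiv.swap (⟨k, m⟩ : ObjIdx Nk) ⟨k, m'⟩ ⟨k, n⟩ = ⟨k, Equiv.swap m m' n⟩ := by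
  rcases eq_or_ne n m with rfl | h1
  · simp
  · rcases eq_or_ne n m' with rfl | h2
    · simp
    · rw [Equiv.swap_apply_of_ne_of_ne (by simp [h1]) (by simp [h2]),
        Equiv.swap_apply_of_ne_of_ne h1 h2]

lemma swapE_mk {k : Fin K} (m m' : Fin (Nk k)) (w : ExtCur Nk St Ac) (n : Fin (Nk k)) :
    swapE (⟨k, m⟩ : ObjIdx Nk) ⟨k, m'⟩ rfl w ⟨k, n⟩ = w ⟨k, Equiv.swap m m' n⟩ := by
  have h : HEq (swapE (⟨k, m⟩ : ObjIdx Nk) ⟨k, m'⟩ rfl w ⟨k, n⟩)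
      (w (Equiv.swap (⟨k, m⟩ : ObjIdx Nk) ⟨k, m'⟩ ⟨k, n⟩)) := cast_heq _ _
  rw [swap_mk] at h
  exact eq_of_heq h

lemma swapE_apply_ne (a b : ObjIdx Nk) (h : a.1 = b.1) (w : ExtCur Nk St Ac)
    (o : ObjIdx Nk) (h1 : o ≠ a) (h2 : o ≠ b) :
    swapE a b h w o = w o := by
  have hh : HEq (swapE a b h w o) (w (Equiv.swap a b o)) := cast_heq _ _
  rw [Equiv.swap_apply_of_ne_of_ne h1 h2] at hh
  exact eq_of_heq hh

lemma swapN_mk {k : Fin K} (m m' : Fin (Nk k)) (x : ExtNxt Nk St) (n : Fin (Nk k)) :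
    swapN (⟨k, m⟩ : ObjIdx Nk) ⟨k, m'⟩ rfl x ⟨k, n⟩ = x ⟨k, Equiv.swap m m' n⟩ := by
  have h : HEq (swapN (⟨k, m⟩ : ObjIdx Nk) ⟨k, m'⟩ rfl x ⟨k, n⟩)
      (x (Equiv.swap (⟨k, m⟩ : ObjIdx Nk) ⟨k, m'⟩ ⟨k, n⟩)) := cast_heq _ _
  rw [swap_mk] at h
  exact eq_of_heq h

lemma swapN_apply_ne (a b : ObjIdx Nk) (h : a.1 = b.1) (x : ExtNxt Nk St)
    (o : ObjIdx Nk) (h1 : o ≠ a) (h2 : o ≠ b) :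
    swapN a b h x o = x o := by
  have hh : HEq (swapN a b h x o) (x (Equiv.swap a b o)) := cast_heq _ _
  rw [Equiv.swap_apply_of_ne_of_ne h1 h2] at hh
  exact eq_of_heq hh

lemma mk_ne_mk_of_fst {k k' : Fin K} (hk : k' ≠ k) (n : Fin (Nk k')) (m : Fin (Nk k)) :
    (⟨k', n⟩ : ObjIdx Nk) ≠ ⟨k, m⟩ := by
  intro hc; exact hk (congrArg Sigma.fst hc)

lemma swapN_invol {k : Fin K} (m m' : Fin (Nk k)) :
    Function.Involutive (swapN (⟨k, m⟩ : ObjIdx Nk) ⟨k, m'⟩ rfl : ExtNxt Nk St → ExtNxt Nk St) := by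
  intro x
  funext o
  rcases o with ⟨k', n⟩
  rcases eq_or_ne k' k with rfl | hk
  · rw [swapN_mk, swapN_mk, Equiv.swap_apply_self]
  · rw [swapN_apply_ne _ _ _ _ _ (mk_ne_mk_of_fst hk n m) (mk_ne_mk_of_fst hk n m'),
      swapN_apply_ne _ _ _ _ _ (mk_ne_mk_of_fst hk n m) (mk_ne_mk_of_fst hk n m')]

section Kernel

set_option linter.unusedSectionVars false
variable [∀ k, Fintype (St k)] [∀ k, DecidableEq (St k)] [∀ k, Nonempty (St k)]

/-- Id map of each class read off a configuration. -/
def idmap (w : ExtCur Nk St Ac) (k : Fin K) (m : Fin (Nk k)) : Fin (Nk k) :=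
  (w ⟨k, m⟩).1.2

/-- Configuration has distinct Ids within each class. -/
def Goodw (w : ExtCur Nk St Ac) : Prop := ∀ k, Function.Injective (idmap w k)

noncomputable def idinv (w : ExtCur Nk St Ac) (k : Fin K) (i : Fin (Nk k)) : Fin (Nk k) :=
  haveI : Nonempty (Fin (Nk k)) := ⟨i⟩
  Function.invFun (idmap w k) i

lemma idinv_idmap (w : ExtCur Nk St Ac) (hw : Goodw w) (k : Fin K) (m : Fin (Nk k)) :
    idinv w k (idmap w k m) = m := by
  haveI : Nonempty (Fin (Nk k)) := ⟨m⟩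
  exact Function.leftInverse_invFun (hw k) m

lemma idmap_idinv (w : ExtCur Nk St Ac) (hw : Goodw w) (k : Fin K) (i : Fin (Nk k)) :
    idmap w k (idinv w k i) = i := by
  haveI : Nonempty (Fin (Nk k)) := ⟨i⟩
  exact Function.invFun_eq (Finite.surjective_of_injective (hw k) i)

noncomputable def vof (w : ExtCur Nk St Ac) : CleanCur Nk St Ac :=
  fun o => ((w ⟨o.1, idinv w o.1 o.2⟩).1.1, (w ⟨o.1, idinv w o.1 o.2⟩).2)

noncomputable def yof (w : ExtCur Nk St Ac) (x' : ExtNxt Nk St) : CleanNxt Nk St :=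
  fun o => (x' ⟨o.1, idinv w o.1 o.2⟩).1

def IdPres (w : ExtCur Nk St Ac) (x' : ExtNxt Nk St) : Prop :=
  ∀ o, (x' o).2 = (w o).1.2

noncomputable def Text (T : CleanCur Nk St Ac → CleanNxt Nk St → ℝ)
    (w : ExtCur Nk St Ac) (x' : ExtNxt Nk St) : ℝ :=
  if IdPres w x' then
    (if Goodw w then T (vof w) (yof w x') else (Fintype.card (CleanNxt Nk St) : ℝ)⁻¹)
  else 0

/-- Splitting an extended next-step configuration into its state part and Id part. -/
def splitE : ExtNxt Nk St ≃ (CleanNxt Nk St × (∀ o : ObjIdx Nk, Fin (Nk o.1))) where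
  toFun x := (fun o => (x o).1, fun o => (x o).2)
  invFun p := fun o => (p.1 o, p.2 o)
  left_inv x := rfl
  right_inv p := rfl

lemma sum_idPres (w : ExtCur Nk St Ac) (G : CleanNxt Nk St → ℝ) :
    (∑ x' : ExtNxt Nk St, if IdPres w x' then G (fun o => (x' o).1) else 0)
      = ∑ f : CleanNxt Nk St, G f := by
  rw [← Equiv.sum_comp (splitE (St := St)).symm
    (fun x' => if IdPres w x' then G (fun o => (x' o).1) else 0)]
  rw [Fintype.sum_prod_type]
  refine Finset.sum_congr rfl (fun f _ => ?_)
  have : ∀ g : (∀ o : ObjIdx Nk, Fin (Nk o.1)),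
      (if IdPres w ((splitE (St := St)).symm (f, g)) then G f else 0)
        = if g = (fun o => (w o).1.2) then G f else 0 := by
    intro g
    congr 1
    simp only [eq_iff_iff]
    constructor
    · intro h; funext o; exact h o
    · intro h o; exact congrFun h o
  calc (∑ g : (∀ o : ObjIdx Nk, Fin (Nk o.1)),
          if IdPres w ((splitE (St := St)).symm (f, g)) then
            G (fun o => (((splitE (St := St)).symm (f, g)) o).1) else 0)
      = ∑ g : (∀ o : ObjIdx Nk, Fin (Nk o.1)),
          if g = (fun o => (w o).1.2) then G f else 0 :=
        Finset.sum_congr rfl (fun g _ => this g)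
    _ = G f := by rw [Finset.sum_ite_eq' Finset.univ _ (fun _ => G f)]; simp

lemma bij_precomp (w : ExtCur Nk St Ac) (hw : Goodw w) :
    Function.Bijective (fun (f : CleanNxt Nk St) =>
      (fun o => f ⟨o.1, idinv w o.1 o.2⟩ : CleanNxt Nk St)) := by
  rw [← Finite.injective_iff_bijective]
  intro f f' h
  funext o
  rcases o with ⟨k, i⟩
  have h2 := congrFun h ⟨k, idmap w k i⟩
  simp only at h2
  rw [show idinv w k (idmap w k i) = i from idinv_idmap w hw k i] at h2
  exact h2

lemma sum_Text (T : CleanCur Nk St Ac → CleanNxt Nk St → ℝ)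
    (hT1 : ∀ v, ∑ y, T v y = 1) (w : ExtCur Nk St Ac) :
    ∑ x' : ExtNxt Nk St, Text T w x' = 1 := by
  have key : ∀ x' : ExtNxt Nk St, Text T w x' =
      if IdPres w x' then
        (if Goodw w then T (vof w) (fun o => (fun p => (x' p).1) ⟨o.1, idinv w o.1 o.2⟩)
        else (Fintype.card (CleanNxt Nk St) : ℝ)⁻¹) else 0 := fun _ => rfl
  rw [Finset.sum_congr rfl (fun x' _ => key x'),
    sum_idPres w (fun f => if Goodw w then T (vof w) (fun o => f ⟨o.1, idinv w o.1 o.2⟩)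
      else (Fintype.card (CleanNxt Nk St) : ℝ)⁻¹)]
  by_cases hg : Goodw w
  · simp only [if_pos hg]
    rw [Function.Bijective.sum_comp (bij_precomp w hg) (fun y => T (vof w) y)]
    exact hT1 _
  · simp only [if_neg hg]
    haveI : Nonempty (CleanNxt Nk St) := ⟨fun o => Classical.arbitrary _⟩
    rw [Finset.sum_const, nsmul_eq_mul, Finset.card_univ,
      mul_inv_cancel₀ (Nat.cast_ne_zero.2 Fintype.card_ne_zero)]

section Swap

variable {k : Fin K} (m m' : Fin (Nk k))

lemma idmap_swapE_same (w : ExtCur Nk St Ac) (n : Fin (Nk k)) :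
    idmap (swapE (⟨k, m⟩ : ObjIdx Nk) ⟨k, m'⟩ rfl w) k n = idmap w k (Equiv.swap m m' n) := by
  unfold idmap
  rw [swapE_mk]

lemma idmap_swapE_other (w : ExtCur Nk St Ac) {k' : Fin K} (hk : k' ≠ k) (n : Fin (Nk k')) :
    idmap (swapE (⟨k, m⟩ : ObjIdx Nk) ⟨k, m'⟩ rfl w) k' n = idmap w k' n := by
  unfold idmap
  rw [swapE_apply_ne _ _ _ _ _ (mk_ne_mk_of_fst hk n m) (mk_ne_mk_of_fst hk n m')]

lemma goodw_swapE (w : ExtCur Nk St Ac) :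
    Goodw (swapE (⟨k, m⟩ : ObjIdx Nk) ⟨k, m'⟩ rfl w) ↔ Goodw w := by
  constructor
  · intro hw k'
    rcases eq_or_ne k' k with rfl | hk
    · have he : idmap w k' = (idmap (swapE (⟨k', m⟩ : ObjIdx Nk) ⟨k', m'⟩ rfl w) k')
          ∘ (Equiv.swap m m') := by
        funext n
        simp [idmap_swapE_same, Equiv.swap_apply_self]
      rw [he]
      exact (hw k').comp (Equiv.injective _)
    · have he : idmap w k' = idmap (swapE (⟨k, m⟩ : ObjIdx Nk) ⟨k, m'⟩ rfl w) k' := by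
        funext n; rw [idmap_swapE_other m m' w hk]
      rw [he]; exact hw k'
  · intro hw k'
    rcases eq_or_ne k' k with rfl | hk
    · have he : idmap (swapE (⟨k', m⟩ : ObjIdx Nk) ⟨k', m'⟩ rfl w) k'
          = (idmap w k') ∘ (Equiv.swap m m') := by
        funext n; rw [idmap_swapE_same]; rfl
      rw [he]
      exact (hw k').comp (Equiv.injective _)
    · have he : idmap (swapE (⟨k, m⟩ : ObjIdx Nk) ⟨k, m'⟩ rfl w) k' = idmap w k' := by
        funext n; rw [idmap_swapE_other m m' w hk]
      rw [he]; exact hw k'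

lemma idinv_swapE_same (w : ExtCur Nk St Ac) (hw : Goodw w) (i : Fin (Nk k)) :
    idinv (swapE (⟨k, m⟩ : ObjIdx Nk) ⟨k, m'⟩ rfl w) k i = Equiv.swap m m' (idinv w k i) := by
  have hg' : Goodw (swapE (⟨k, m⟩ : ObjIdx Nk) ⟨k, m'⟩ rfl w) := (goodw_swapE m m' w).2 hw
  apply hg' k
  rw [idmap_idinv _ hg', idmap_swapE_same, Equiv.swap_apply_self, idmap_idinv _ hw]

lemma idinv_swapE_other (w : ExtCur Nk St Ac) {k' : Fin K} (hk : k' ≠ k) (i : Fin (Nk k')) :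
    idinv (swapE (⟨k, m⟩ : ObjIdx Nk) ⟨k, m'⟩ rfl w) k' i = idinv w k' i := by
  unfold idinv
  congr 1
  funext n
  exact idmap_swapE_other m m' w hk n

lemma vof_swapE (w : ExtCur Nk St Ac) (hw : Goodw w) :
    vof (swapE (⟨k, m⟩ : ObjIdx Nk) ⟨k, m'⟩ rfl w) = vof w := by
  funext o
  rcases o with ⟨k', i⟩
  rcases eq_or_ne k' k with rfl | hk
  · show vof _ ⟨k', i⟩ = _
    unfold vof
    simp only
    rw [idinv_swapE_same m m' w hw i, swapE_mk, Equiv.swap_apply_self]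
  · unfold vof
    simp only
    rw [idinv_swapE_other m m' w hk i,
      swapE_apply_ne _ _ _ _ _ (mk_ne_mk_of_fst hk _ m) (mk_ne_mk_of_fst hk _ m')]

lemma yof_swapE (w : ExtCur Nk St Ac) (hw : Goodw w) (x' : ExtNxt Nk St) :
    yof (swapE (⟨k, m⟩ : ObjIdx Nk) ⟨k, m'⟩ rfl w) x'
      = yof w (swapN (⟨k, m⟩ : ObjIdx Nk) ⟨k, m'⟩ rfl x') := by
  funext o
  rcases o with ⟨k', i⟩
  rcases eq_or_ne k' k with rfl | hk
  · unfold yof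
    simp only
    rw [idinv_swapE_same m m' w hw i, swapN_mk]
  · unfold yof
    simp only
    rw [idinv_swapE_other m m' w hk i,
      swapN_apply_ne _ _ _ _ _ (mk_ne_mk_of_fst hk _ m) (mk_ne_mk_of_fst hk _ m')]

lemma idPres_swapE_fwd (w : ExtCur Nk St Ac) (x' : ExtNxt Nk St)
    (h : IdPres (swapE (⟨k, m⟩ : ObjIdx Nk) ⟨k, m'⟩ rfl w) x') :
    IdPres w (swapN (⟨k, m⟩ : ObjIdx Nk) ⟨k, m'⟩ rfl x') := by
  intro o
  rcases o with ⟨k', n⟩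
  rcases eq_or_ne k' k with rfl | hk
  · rw [swapN_mk]
    have h2 := h ⟨k', Equiv.swap m m' n⟩
    rw [swapE_mk, Equiv.swap_apply_self] at h2
    exact h2
  · rw [swapN_apply_ne _ _ _ _ _ (mk_ne_mk_of_fst hk _ m) (mk_ne_mk_of_fst hk _ m')]
    have h2 := h ⟨k', n⟩
    rw [swapE_apply_ne _ _ _ _ _ (mk_ne_mk_of_fst hk _ m) (mk_ne_mk_of_fst hk _ m')] at h2
    exact h2

lemma swapE_invol (w : ExtCur Nk St Ac) :
    swapE (⟨k, m⟩ : ObjIdx Nk) ⟨k, m'⟩ rfl (swapE (⟨k, m⟩ : ObjIdx Nk) ⟨k, m'⟩ rfl w) = w := by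
  funext o
  rcases o with ⟨k', n⟩
  rcases eq_or_ne k' k with rfl | hk
  · rw [swapE_mk, swapE_mk, Equiv.swap_apply_self]
  · rw [swapE_apply_ne _ _ _ _ _ (mk_ne_mk_of_fst hk _ m) (mk_ne_mk_of_fst hk _ m'),
      swapE_apply_ne _ _ _ _ _ (mk_ne_mk_of_fst hk _ m) (mk_ne_mk_of_fst hk _ m')]

lemma idPres_swapE (w : ExtCur Nk St Ac) (x' : ExtNxt Nk St) :
    IdPres (swapE (⟨k, m⟩ : ObjIdx Nk) ⟨k, m'⟩ rfl w) x'
      ↔ IdPres w (swapN (⟨k, m⟩ : ObjIdx Nk) ⟨k, m'⟩ rfl x') := by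
  constructor
  · exact idPres_swapE_fwd m m' w x'
  · intro h
    have h2 := idPres_swapE_fwd m m' (swapE (⟨k, m⟩ : ObjIdx Nk) ⟨k, m'⟩ rfl w)
      (swapN (⟨k, m⟩ : ObjIdx Nk) ⟨k, m'⟩ rfl x')
    rw [swapE_invol, swapN_invol] at h2
    exact h2 h

lemma Text_swapE (T : CleanCur Nk St Ac → CleanNxt Nk St → ℝ)
    (w : ExtCur Nk St Ac) (x' : ExtNxt Nk St) :
    Text T (swapE (⟨k, m⟩ : ObjIdx Nk) ⟨k, m'⟩ rfl w) x'
      = Text T w (swapN (⟨k, m⟩ : ObjIdx Nk) ⟨k, m'⟩ rfl x') := by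
  unfold Text
  by_cases hp : IdPres w (swapN (⟨k, m⟩ : ObjIdx Nk) ⟨k, m'⟩ rfl x')
  · rw [if_pos ((idPres_swapE m m' w x').2 hp), if_pos hp]
    by_cases hg : Goodw w
    · rw [if_pos ((goodw_swapE m m' w).2 hg), if_pos hg, vof_swapE m m' w hg,
        yof_swapE m m' w hg x']
    · rw [if_neg (fun h => hg ((goodw_swapE m m' w).1 h)), if_neg hg]
  · rw [if_neg (fun h => hp ((idPres_swapE m m' w x').1 h)), if_neg hp]

lemma objLawE_Text_swap [∀ k, Fintype (Ac k)]
    (T : CleanCur Nk St Ac → CleanNxt Nk St → ℝ) (i : ObjIdx Nk)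
    (w : ExtCur Nk St Ac) (y : St i.1 × Fin (Nk i.1)) :
    objLawE (Text T) i (swapE (⟨k, m⟩ : ObjIdx Nk) ⟨k, m'⟩ rfl w) y
      = ∑ x' : ExtNxt Nk St,
          if swapN (⟨k, m⟩ : ObjIdx Nk) ⟨k, m'⟩ rfl x' i = y then Text T w x' else 0 := by
  unfold objLawE
  have hb : Function.Bijective
      (swapN (⟨k, m⟩ : ObjIdx Nk) ⟨k, m'⟩ rfl : ExtNxt Nk St → ExtNxt Nk St) :=
    Function.Involutive.bijective (swapN_invol m m')
  rw [← Function.Bijective.sum_comp hb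
    (fun z => if z i = y then Text T (swapE (⟨k, m⟩ : ObjIdx Nk) ⟨k, m'⟩ rfl w) z else 0)]
  refine Finset.sum_congr rfl (fun x' _ => ?_)
  rw [Text_swapE m m' T w (swapN (⟨k, m⟩ : ObjIdx Nk) ⟨k, m'⟩ rfl x'), swapN_invol m m' x']

end Swap

end Kernel

/-- Any transition kernel of an object-oriented FMDP can be extended, by
adding an `Id` state attribute to every object, to a kernel that preserves the `Id`s almost
surely, mirrors the original dynamics on every configuration with distinct `Id`s (after
reindexing the instances of each class by their `Id`s), and satisfies both result symmetry
and causation symmetry. -/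
theorem exists_id_extension_with_symmetries
    (K : ℕ) (Nk : Fin K → ℕ) (St Ac : Fin K → Type)
    [∀ k, Fintype (St k)] [∀ k, DecidableEq (St k)] [∀ k, Nonempty (St k)]
    [∀ k, Fintype (Ac k)] [∀ k, DecidableEq (Ac k)] [∀ k, Nonempty (Ac k)]
    (T : CleanCur Nk St Ac → CleanNxt Nk St → ℝ)
    (hT0 : ∀ w y, 0 ≤ T w y) (hT1 : ∀ w, ∑ y, T w y = 1) :
    ∃ T' : ExtCur Nk St Ac → ExtNxt Nk St → ℝ,
      (∀ w x', 0 ≤ T' w x') ∧ (∀ w, ∑ x', T' w x' = 1) ∧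
      -- (i) Ids are preserved with probability one
      (∀ (w : ExtCur Nk St Ac) (x' : ExtNxt Nk St), T' w x' ≠ 0 →
        ∀ o : ObjIdx Nk, (x' o).2 = (w o).1.2) ∧
      -- (ii) on configurations with distinct Ids, T' mirrors T up to Id-reindexing
      (∀ w : ExtCur Nk St Ac,
        (∀ (k : Fin K) (m m' : Fin (Nk k)),
          (w ⟨k, m⟩).1.2 = (w ⟨k, m'⟩).1.2 → m = m') →
        ∀ v : CleanCur Nk St Ac,
          (∀ (k : Fin K) (m : Fin (Nk k)),
            v ⟨k, (w ⟨k, m⟩).1.2⟩ = ((w ⟨k, m⟩).1.1, (w ⟨k, m⟩).2)) →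
          ∀ y : CleanNxt Nk St,
            (∑ x' : ExtNxt Nk St,
              if ∀ (k : Fin K) (m : Fin (Nk k)), (x' ⟨k, m⟩).1 = y ⟨k, (w ⟨k, m⟩).1.2⟩
              then T' w x' else 0) = T v y) ∧
      -- (iii) the extended kernel is result- and causation-symmetric
      ResultSymE T' ∧ CausSymE T' := by
  refine ⟨Text T, ?_, sum_Text T hT1, ?_, ?_, ?_, ?_⟩
  · -- nonneg
    intro w x'
    unfold Text
    split_ifs with h1 h2
    · exact hT0 _ _
    · positivity
    · exact le_refl 0
  · -- (i) Id preservation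
    intro w x' hne o
    by_contra hp
    apply hne
    have hnp : ¬ IdPres w x' := fun h => hp (h o)
    simp [Text, hnp]
  · -- (ii)
    intro w hw v hv y
    have hg : Goodw w := fun k a b h => hw k a b h
    have hveq : v = vof w := by
      funext o
      rcases o with ⟨k, i⟩
      have h1 := hv k (idinv w k i)
      rw [show (w ⟨k, idinv w k i⟩).1.2 = i from idmap_idinv w hg k i] at h1
      exact h1
    have hzero : ∀ b ≠ (fun o => (y ⟨o.1, (w o).1.2⟩, (w o).1.2) : ExtNxt Nk St),
        (if ∀ (k : Fin K) (m : Fin (Nk k)), (b ⟨k, m⟩).1 = y ⟨k, (w ⟨k, m⟩).1.2⟩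
          then Text T w b else 0) = 0 := by
      intro b hb
      by_cases hP : ∀ (k : Fin K) (mm : Fin (Nk k)), (b ⟨k, mm⟩).1 = y ⟨k, (w ⟨k, mm⟩).1.2⟩
      · rw [if_pos hP]
        by_cases hip : IdPres w b
        · exfalso
          apply hb
          funext o
          exact Prod.ext (hP o.1 o.2) (hip o)
        · simp [Text, hip]
      · rw [if_neg hP]
    rw [Fintype.sum_eq_single _ hzero]
    rw [if_pos (fun k mm => rfl :
      ∀ (k : Fin K) (mm : Fin (Nk k)),
        ((fun o => (y ⟨o.1, (w o).1.2⟩, (w o).1.2) : ExtNxt Nk St) ⟨k, mm⟩).1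
          = y ⟨k, (w ⟨k, mm⟩).1.2⟩)]
    have hip : IdPres w (fun o => (y ⟨o.1, (w o).1.2⟩, (w o).1.2)) := fun o => rfl
    have hval : Text T w (fun o => (y ⟨o.1, (w o).1.2⟩, (w o).1.2))
        = T (vof w) (yof w (fun o => (y ⟨o.1, (w o).1.2⟩, (w o).1.2))) := by
      simp [Text, hip, hg]
    rw [hval, hveq]
    congr 1
    funext o
    rcases o with ⟨k, i⟩
    show y ⟨k, (w ⟨k, idinv w k i⟩).1.2⟩ = y ⟨k, i⟩
    rw [show (w ⟨k, idinv w k i⟩).1.2 = i from idmap_idinv w hg k i]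
  · -- result symmetry
    intro k m m' w y
    rw [objLawE_Text_swap m m' T ⟨k, m'⟩ w y]
    unfold objLawE
    refine Finset.sum_congr rfl (fun x' _ => ?_)
    rw [swapN_mk m m' x' m', Equiv.swap_apply_right]
  · -- causation symmetry
    intro i k m m' ha hb w y
    rw [objLawE_Text_swap m m' T i w y]
    unfold objLawE
    refine Finset.sum_congr rfl (fun x' _ => ?_)
    rw [swapN_apply_ne _ _ _ _ _ (Ne.symm ha) (Ne.symm hb)]
end
end
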